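/- arXiv:1503.06081 — 6 statements merged into one kernel-verified Lean document; each statement's English description precedes it below -/
import Mathlib

section
/- Let S be a factorial set of words over a finite alphabet A, with factor complexity p_n = Card(S ∩ A^n), first difference s_n = p_{n+1} − p_n and second difference b_n = s_{n+1} − s_n. Then for all n ≥ 0 one has b_n = Σ_{w ∈ S ∩ A^n} m_S(w) and s_n = Σ_{w ∈ S ∩ A^n} (r_S(w) − 1). -/
/-! Factoriality makes every word of length `n + 1` in `S` factor uniquely as `w a` with `w` a
word of length `n` in `S` and `a ∈ R_S(w)`, and likewise as `a w` with `a ∈ L_S(w)`; every word of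
length `n + 2` factors uniquely as `a w b` with `(a, b) ∈ E_S(w)`. Hence `p_{n+1} = Σ r_S(w) = Σ ℓ_S(w)`,
`p_{n+2} = Σ e_S(w)` and `p_n = Σ 1`, sums over `S ∩ A^n`, and both identities follow by linearity. -/

namespace Paper

variable {A : Type*}

/-- A set of words is factorial if it contains all factors (infixes) of its elements. -/
def Factorial (S : Set (List A)) : Prop :=
  ∀ u v : List A, u <:+: v → v ∈ S → u ∈ S

/-- Left extensions: `L_S(w) = {a | aw ∈ S}`. -/
def extL (S : Set (List A)) (w : List A) : Set A := {a | a :: w ∈ S}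

/-- Right extensions: `R_S(w) = {a | wa ∈ S}`. -/
def extR (S : Set (List A)) (w : List A) : Set A := {a | w ++ [a] ∈ S}

/-- Two-sided extensions: `E_S(w) = {(a,b) | awb ∈ S}`. -/
def extE (S : Set (List A)) (w : List A) : Set (A × A) := {p | p.1 :: (w ++ [p.2]) ∈ S}

/-- `m_S(w) = e_S(w) - ℓ_S(w) - r_S(w) + 1`. -/
noncomputable def mS (S : Set (List A)) (w : List A) : ℤ :=
  ((extE S w).ncard : ℤ) - (extL S w).ncard - (extR S w).ncard + 1

/-- A set is neutral if it is factorial and every nonempty word is neutral (`m_S(w) = 0`). -/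
def Neutral (S : Set (List A)) : Prop :=
  Factorial S ∧ ∀ w ∈ S, w ≠ [] → mS S w = 0

/-- The characteristic `χ(S) = 1 - m_S(ε)`. -/
noncomputable def chiS (S : Set (List A)) : ℤ := 1 - mS S []

end Paper

theorem Set.ncard_biUnion_image_eq_finsum {ι β α : Type*} {T : Set ι} (hT : T.Finite)
    {g : ι → Set β} (hg : ∀ i ∈ T, (g i).Finite) (f : ι → β → α)
    (hf : Function.Injective (Function.uncurry f)) :
    (⋃ i ∈ T, f i '' g i).ncard = ∑ᶠ i ∈ T, (g i).ncard := by
  have hfi : ∀ i, Function.Injective (f i) := fun i b c h => congrArg Prod.snd (@hf (i, b) (i, c) h)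
  rw [hT.ncard_biUnion (fun i hi => (hg i hi).image (f i))]
  · exact finsum_mem_congr rfl fun i _ => Set.ncard_image_of_injective _ (hfi i)
  · rintro i - j - hij
    refine Set.disjoint_left.2 ?_
    rintro _ ⟨b, -, rfl⟩ ⟨c, -, hcb⟩
    exact hij (congrArg Prod.fst (@hf (j, c) (i, b) hcb)).symm

namespace Paper

variable {A : Type*} {S : Set (List A)}

theorem finite_inter_length_eq [Finite A] (S : Set (List A)) (n : ℕ) :
    (S ∩ {w : List A | w.length = n}).Finite :=
  (List.finite_length_eq A n).inter_of_right S

theorem inter_length_eq_succ_eq_biUnion_extR (hS : Factorial S) (n : ℕ) :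
    S ∩ {v | v.length = n + 1} =
      ⋃ w ∈ S ∩ {w | w.length = n}, (fun a => w ++ [a]) '' extR S w := by
  ext v
  simp only [Set.mem_inter_iff, Set.mem_ofPred_eq, Set.mem_iUnion, Set.mem_image, extR]
  constructor
  · rintro ⟨hv, hlen⟩
    obtain rfl | ⟨w, a, rfl⟩ := v.eq_nil_or_concat'
    · simp at hlen
    · exact ⟨w, ⟨hS _ _ (List.prefix_append w [a]).isInfix hv, by simpa using hlen⟩, a, hv, rfl⟩
  · rintro ⟨w, ⟨-, rfl⟩, a, ha, rfl⟩
    exact ⟨ha, by simp⟩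

theorem inter_length_eq_succ_eq_biUnion_extL (hS : Factorial S) (n : ℕ) :
    S ∩ {v | v.length = n + 1} =
      ⋃ w ∈ S ∩ {w | w.length = n}, (fun a => a :: w) '' extL S w := by
  ext v
  simp only [Set.mem_inter_iff, Set.mem_ofPred_eq, Set.mem_iUnion, Set.mem_image, extL]
  constructor
  · rintro ⟨hv, hlen⟩
    obtain ⟨a, w, rfl⟩ := v.exists_of_length_succ hlen
    exact ⟨w, ⟨hS _ _ (List.suffix_cons a w).isInfix hv, by simpa using hlen⟩, a, hv, rfl⟩
  · rintro ⟨w, ⟨-, rfl⟩, a, ha, rfl⟩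
    exact ⟨ha, by simp⟩

theorem inter_length_eq_add_two_eq_biUnion_extE (hS : Factorial S) (n : ℕ) :
    S ∩ {v | v.length = n + 2} =
      ⋃ w ∈ S ∩ {w | w.length = n}, (fun p : A × A => p.1 :: (w ++ [p.2])) '' extE S w := by
  ext v
  simp only [Set.mem_inter_iff, Set.mem_ofPred_eq, Set.mem_iUnion, Set.mem_image, extE]
  constructor
  · rintro ⟨hv, hlen⟩
    obtain ⟨a, u, rfl⟩ := v.exists_of_length_succ hlen
    obtain rfl | ⟨w, b, rfl⟩ := u.eq_nil_or_concat'
    · simp at hlen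
    · exact ⟨w, ⟨hS _ _ (List.infix_append' [a] w [b]) hv, by simpa using hlen⟩, (a, b), hv, rfl⟩
  · rintro ⟨w, ⟨-, rfl⟩, p, hp, rfl⟩
    exact ⟨hp, by simp⟩

variable [Finite A]

theorem ncard_length_succ_eq_finsum_extR (hS : Factorial S) (n : ℕ) :
    (S ∩ {v | v.length = n + 1}).ncard = ∑ᶠ w ∈ S ∩ {w | w.length = n}, (extR S w).ncard := by
  rw [inter_length_eq_succ_eq_biUnion_extR hS,
    Set.ncard_biUnion_image_eq_finsum (finite_inter_length_eq S n) (fun _ _ => Set.toFinite _)]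
  rintro ⟨w, a⟩ ⟨w', a'⟩ h
  obtain ⟨rfl, h⟩ := List.append_inj' h rfl
  simp_all

theorem ncard_length_succ_eq_finsum_extL (hS : Factorial S) (n : ℕ) :
    (S ∩ {v | v.length = n + 1}).ncard = ∑ᶠ w ∈ S ∩ {w | w.length = n}, (extL S w).ncard := by
  rw [inter_length_eq_succ_eq_biUnion_extL hS,
    Set.ncard_biUnion_image_eq_finsum (finite_inter_length_eq S n) (fun _ _ => Set.toFinite _)]
  rintro ⟨w, a⟩ ⟨w', a'⟩ h
  simp_all [Function.uncurry]

theorem ncard_length_add_two_eq_finsum_extE (hS : Factorial S) (n : ℕ) :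
    (S ∩ {v | v.length = n + 2}).ncard = ∑ᶠ w ∈ S ∩ {w | w.length = n}, (extE S w).ncard := by
  rw [inter_length_eq_add_two_eq_biUnion_extE hS,
    Set.ncard_biUnion_image_eq_finsum (finite_inter_length_eq S n) (fun _ _ => Set.toFinite _)]
  rintro ⟨w, a, b⟩ ⟨w', a', b'⟩ h
  simp only [Function.uncurry, List.cons.injEq] at h
  obtain ⟨rfl, h⟩ := h
  obtain ⟨rfl, h⟩ := List.append_inj' h rfl
  simp_all

end Paper

open Paper in
/-- Proposition 3.5 of Cassaigne: for a factorial set,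
`b_n = Σ_{w ∈ S ∩ A^n} m_S(w)` and `s_n = Σ_{w ∈ S ∩ A^n} (r_S(w) - 1)`,
where `p_n = Card(S ∩ A^n)`, `s_n = p_{n+1} - p_n`, `b_n = s_{n+1} - s_n`. -/
theorem cassaigne_first_and_second_differences
    {A : Type*} [Fintype A] (S : Set (List A)) (hS : Factorial S) :
    ∀ n : ℕ,
      ((((S ∩ {w | w.length = n + 2}).ncard : ℤ) - ((S ∩ {w | w.length = n + 1}).ncard : ℤ)) -
        (((S ∩ {w | w.length = n + 1}).ncard : ℤ) - ((S ∩ {w | w.length = n}).ncard : ℤ))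
          = ∑ᶠ w ∈ S ∩ {w : List A | w.length = n}, mS S w) ∧
      (((S ∩ {w | w.length = n + 1}).ncard : ℤ) - ((S ∩ {w | w.length = n}).ncard : ℤ)
          = ∑ᶠ w ∈ S ∩ {w : List A | w.length = n}, (((extR S w).ncard : ℤ) - 1)) := by
  intro n
  have hT := finite_inter_length_eq S n
  have cast_count {k : ℕ} {f : List A → ℕ} (h : k = ∑ᶠ w ∈ S ∩ {w | w.length = n}, f w) :
      (k : ℤ) = ∑ᶠ w ∈ S ∩ {w | w.length = n}, (f w : ℤ) := by
    rw [h, Nat.cast_finsum_mem hT]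
  have hE := cast_count (ncard_length_add_two_eq_finsum_extE hS n)
  have hL := cast_count (ncard_length_succ_eq_finsum_extL hS n)
  have hR := cast_count (ncard_length_succ_eq_finsum_extR hS n)
  have h1 := cast_count (f := fun _ => 1) finsum_one.symm
  simp only [mS, Nat.cast_one] at h1 ⊢
  refine ⟨?_, by rw [finsum_mem_sub_distrib _ _ hT, hR, h1]⟩
  rw [finsum_mem_add_distrib hT, finsum_mem_sub_distrib _ _ hT, finsum_mem_sub_distrib _ _ hT]
  linarith
end

section
/- Let S be a biextendable neutral set over a finite alphabet A with A ⊆ S. Then for every x ∈ S one has λ_S(x) ≥ 0 and ρ_S(x) ≥ 0, and moreover Σ_{a ∈ L_S(x)} ρ_S(ax) = ρ_S(x) and Σ_{a ∈ R_S(x)} λ_S(xa) = λ_S(x). -/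
namespace Paper

/-- A factorial set is biextendable if every word of it is biextendable, i.e. `e_S(w) > 0`. -/
def Biextendable {A : Type*} (S : Set (List A)) : Prop :=
  Factorial S ∧ ∀ w ∈ S, (extE S w).Nonempty

/-- `ρ_S(x) = e_S(x) - ℓ_S(x)`. -/
noncomputable def rhoS {A : Type*} (S : Set (List A)) (w : List A) : ℤ :=
  ((extE S w).ncard : ℤ) - (extL S w).ncard

/-- `λ_S(x) = e_S(x) - r_S(x)`. -/
noncomputable def lamS {A : Type*} (S : Set (List A)) (w : List A) : ℤ :=
  ((extE S w).ncard : ℤ) - (extR S w).ncard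

end Paper

namespace Paper

variable {A : Type*} {S : Set (List A)} {x w : List A}

theorem Factorial.mem_extL_of_mem_extE (hF : Factorial S) {p : A × A} (hp : p ∈ extE S x) :
    p.1 ∈ extL S x :=
  hF _ _ ⟨[], [p.2], by simp⟩ hp

theorem Factorial.mem_extR_of_mem_extE (hF : Factorial S) {p : A × A} (hp : p ∈ extE S x) :
    p.2 ∈ extR S x :=
  hF _ _ ⟨[p.1], [], by simp⟩ hp

theorem Factorial.ncard_extE_eq_finsum_extL [Finite A] (hF : Factorial S) (x : List A) :
    (extE S x).ncard = ∑ᶠ a ∈ extL S x, (extR S (a :: x)).ncard := by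
  have hE : extE S x = ⋃ a ∈ extL S x, Prod.mk a '' extR S (a :: x) := by
    ext ⟨a, b⟩
    simp only [Set.mem_iUnion, Set.mem_image, Prod.mk.injEq, exists_prop]
    exact ⟨fun h => ⟨a, hF.mem_extL_of_mem_extE h, b, h, rfl, rfl⟩,
      by rintro ⟨a, -, b, h, rfl, rfl⟩; exact h⟩
  rw [hE, (Set.toFinite _).ncard_biUnion (fun _ _ => Set.toFinite _)]
  · exact finsum_mem_congr rfl fun a _ =>
      Set.ncard_image_of_injective _ (Prod.mk_right_injective a)
  · intro a _ a' _ hne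
    exact Set.disjoint_left.2 <| by
      rintro _ ⟨b, -, rfl⟩ ⟨b', -, h⟩
      exact hne (congrArg Prod.fst h).symm

theorem Factorial.ncard_extE_eq_finsum_extR [Finite A] (hF : Factorial S) (x : List A) :
    (extE S x).ncard = ∑ᶠ b ∈ extR S x, (extL S (x ++ [b])).ncard := by
  have hE : extE S x = ⋃ b ∈ extR S x, (fun a => (a, b)) '' extL S (x ++ [b]) := by
    ext ⟨a, b⟩
    simp only [Set.mem_iUnion, Set.mem_image, Prod.mk.injEq, exists_prop]
    exact ⟨fun h => ⟨b, hF.mem_extR_of_mem_extE h, a, h, rfl, rfl⟩,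
      by rintro ⟨b, -, a, h, rfl, rfl⟩; exact h⟩
  rw [hE, (Set.toFinite _).ncard_biUnion (fun _ _ => Set.toFinite _)]
  · exact finsum_mem_congr rfl fun b _ =>
      Set.ncard_image_of_injective _ (Prod.mk_left_injective b)
  · intro b _ b' _ hne
    exact Set.disjoint_left.2 <| by
      rintro _ ⟨a, -, rfl⟩ ⟨a', -, h⟩
      exact hne (congrArg Prod.snd h).symm

theorem Factorial.rhoS_eq_finsum [Finite A] (hF : Factorial S) (x : List A) :
    rhoS S x = ∑ᶠ a ∈ extL S x, ((extR S (a :: x)).ncard - 1 : ℤ) := by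
  have hL := Set.toFinite (extL S x)
  rw [rhoS, hF.ncard_extE_eq_finsum_extL, ← finsum_one (s := extL S x), Nat.cast_finsum_mem hL,
    Nat.cast_finsum_mem hL, ← finsum_mem_sub_distrib _ _ hL, Nat.cast_one]

theorem Factorial.lamS_eq_finsum [Finite A] (hF : Factorial S) (x : List A) :
    lamS S x = ∑ᶠ b ∈ extR S x, ((extL S (x ++ [b])).ncard - 1 : ℤ) := by
  have hR := Set.toFinite (extR S x)
  rw [lamS, hF.ncard_extE_eq_finsum_extR, ← finsum_one (s := extR S x), Nat.cast_finsum_mem hR,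
    Nat.cast_finsum_mem hR, ← finsum_mem_sub_distrib _ _ hR, Nat.cast_one]

theorem rhoS_eq_of_mS_eq_zero (h : mS S w = 0) : rhoS S w = (extR S w).ncard - 1 := by
  rw [mS] at h
  rw [rhoS]
  linarith

theorem lamS_eq_of_mS_eq_zero (h : mS S w = 0) : lamS S w = (extL S w).ncard - 1 := by
  rw [mS] at h
  rw [lamS]
  linarith

theorem Biextendable.one_le_ncard_extR [Finite A] (hB : Biextendable S) (hw : w ∈ S) :
    1 ≤ (extR S w).ncard :=
  let ⟨_, hp⟩ := hB.2 w hw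
  (Set.ncard_pos (Set.toFinite _)).2 ⟨_, hB.1.mem_extR_of_mem_extE hp⟩

theorem Biextendable.one_le_ncard_extL [Finite A] (hB : Biextendable S) (hw : w ∈ S) :
    1 ≤ (extL S w).ncard :=
  let ⟨_, hp⟩ := hB.2 w hw
  (Set.ncard_pos (Set.toFinite _)).2 ⟨_, hB.1.mem_extL_of_mem_extE hp⟩

theorem Biextendable.rhoS_nonneg [Finite A] (hB : Biextendable S) (x : List A) :
    0 ≤ rhoS S x := by
  rw [hB.1.rhoS_eq_finsum]
  refine finsum_nonneg fun a => finsum_nonneg fun (ha : a :: x ∈ S) => ?_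
  have := hB.one_le_ncard_extR ha
  omega

theorem Biextendable.lamS_nonneg [Finite A] (hB : Biextendable S) (x : List A) :
    0 ≤ lamS S x := by
  rw [hB.1.lamS_eq_finsum]
  refine finsum_nonneg fun b => finsum_nonneg fun (hb : x ++ [b] ∈ S) => ?_
  have := hB.one_le_ncard_extL hb
  omega

theorem Neutral.finsum_rhoS_cons [Finite A] (hN : Neutral S) (x : List A) :
    ∑ᶠ a ∈ extL S x, rhoS S (a :: x) = rhoS S x := by
  rw [hN.1.rhoS_eq_finsum x]
  exact finsum_mem_congr rfl fun a ha => rhoS_eq_of_mS_eq_zero (hN.2 _ ha (List.cons_ne_nil a x))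

theorem Neutral.finsum_lamS_append [Finite A] (hN : Neutral S) (x : List A) :
    ∑ᶠ b ∈ extR S x, lamS S (x ++ [b]) = lamS S x := by
  rw [hN.1.lamS_eq_finsum x]
  exact finsum_mem_congr rfl fun b hb =>
    lamS_eq_of_mS_eq_zero (hN.2 _ hb (List.append_ne_nil_of_right_ne_nil x (List.cons_ne_nil b _)))

end Paper

open Paper in
theorem rho_lam_of_biextendable_neutral_general
    {A : Type*} [Fintype A] (S : Set (List A))
    (hN : Neutral S) (hbi : Biextendable S) :
    ∀ x ∈ S,
      0 ≤ lamS S x ∧ 0 ≤ rhoS S x ∧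
      (∑ᶠ a ∈ extL S x, rhoS S (a :: x)) = rhoS S x ∧
      (∑ᶠ a ∈ extR S x, lamS S (x ++ [a])) = lamS S x :=
  fun x _ =>
    ⟨hbi.lamS_nonneg x, hbi.rhoS_nonneg x, hN.finsum_rhoS_cons x, hN.finsum_lamS_append x⟩

open Paper in
/-- In a biextendable neutral set containing the alphabet, `λ_S(x), ρ_S(x) ≥ 0` and
`Σ_{a ∈ L(x)} ρ_S(ax) = ρ_S(x)`, `Σ_{a ∈ R(x)} λ_S(xa) = λ_S(x)`. -/
theorem rho_lam_of_biextendable_neutral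
    {A : Type*} [Fintype A] (S : Set (List A))
    (hN : Neutral S) (hbi : Biextendable S) (hA : ∀ a : A, [a] ∈ S) :
    ∀ x ∈ S,
      0 ≤ lamS S x ∧ 0 ≤ rhoS S x ∧
      (∑ᶠ a ∈ extL S x, rhoS S (a :: x)) = rhoS S x ∧
      (∑ᶠ a ∈ extR S x, lamS S (x ++ [a])) = lamS S x :=
  rho_lam_of_biextendable_neutral_general S hN hbi
end

section
/- Let S be a recurrent set of words and let X ⊆ S be a finite S-maximal bifix code of S-degree n. Then the set of nonempty proper prefixes of words of X is a disjoint union of n − 1 S-maximal suffix codes. -/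
namespace Paper

/-- A prefix code: a set of nonempty words, none of which is a proper prefix of another. -/
def PrefixCode {A : Type*} (X : Set (List A)) : Prop :=
  [] ∉ X ∧ ∀ u ∈ X, ∀ v ∈ X, u <+: v → u = v

/-- A suffix code: a set of nonempty words, none of which is a proper suffix of another. -/
def SuffixCode {A : Type*} (X : Set (List A)) : Prop :=
  [] ∉ X ∧ ∀ u ∈ X, ∀ v ∈ X, u <:+ v → u = v

/-- A bifix code is both a prefix code and a suffix code. -/
def BifixCode {A : Type*} (X : Set (List A)) : Prop :=
  PrefixCode X ∧ SuffixCode X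

/-- An `S`-maximal prefix code: a prefix code contained in `S` and not properly contained
in another prefix code contained in `S`. -/
def MaxPrefixCode {A : Type*} (S X : Set (List A)) : Prop :=
  X ⊆ S ∧ PrefixCode X ∧ ∀ Y : Set (List A), PrefixCode Y → Y ⊆ S → X ⊆ Y → X = Y

/-- An `S`-maximal suffix code. -/
def MaxSuffixCode {A : Type*} (S X : Set (List A)) : Prop :=
  X ⊆ S ∧ SuffixCode X ∧ ∀ Y : Set (List A), SuffixCode Y → Y ⊆ S → X ⊆ Y → X = Y

/-- An `S`-maximal bifix code. -/
def MaxBifixCode {A : Type*} (S X : Set (List A)) : Prop :=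
  X ⊆ S ∧ BifixCode X ∧ ∀ Y : Set (List A), BifixCode Y → Y ⊆ S → X ⊆ Y → X = Y

/-- A set `S ≠ {ε}` is recurrent if it is factorial and any two of its words can be
completed into a word of `S`. -/
def Recurrent {A : Type*} (S : Set (List A)) : Prop :=
  S ≠ {([] : List A)} ∧ Factorial S ∧ ∀ u ∈ S, ∀ w ∈ S, ∃ v : List A, u ++ v ++ w ∈ S

/-- An infinite factorial set is uniformly recurrent if each of its words occurs as a
factor of every long enough word of `S`. -/
def UniformlyRecurrent {A : Type*} (S : Set (List A)) : Prop :=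
  S.Infinite ∧ Factorial S ∧
    ∀ u ∈ S, ∃ n : ℕ, 1 ≤ n ∧ ∀ w ∈ S, w.length = n → u <:+: w

/-- Membership in `X^*`: a concatenation of words of `X`. -/
def InStar {A : Type*} (X : Set (List A)) (m : List A) : Prop :=
  ∃ l : List (List A), (∀ u ∈ l, u ∈ X) ∧ l.flatten = m

/-- The set of parses of `w` with respect to a bifix code `X`: triples `(q, x, p)` with
`w = qxp`, `q` has no suffix in `X`, `x ∈ X^*`, `p` has no prefix in `X`. -/
def Parses {A : Type*} (X : Set (List A)) (w : List A) :
    Set (List A × List A × List A) :=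
  {t | t.1 ++ t.2.1 ++ t.2.2 = w ∧ (∀ x ∈ X, ¬ x <:+ t.1) ∧ InStar X t.2.1 ∧
        ∀ x ∈ X, ¬ x <+: t.2.2}

/-- The number of parses `d_X(w)`. -/
noncomputable def dX {A : Type*} (X : Set (List A)) (w : List A) : ℕ :=
  (Parses X w).ncard

/-- `X` has `S`-degree `n` : `n` is the maximal number of parses with respect to `X`
of a word of `S`. -/
def HasDegree {A : Type*} (S X : Set (List A)) (n : ℕ) : Prop :=
  IsGreatest (dX X '' S) n

/-- `v` is an internal factor of `x`, i.e. `x = uvw` with `u, w` nonempty. -/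
def InternalFactor {A : Type*} (v x : List A) : Prop :=
  ∃ u w : List A, u ≠ [] ∧ w ≠ [] ∧ u ++ v ++ w = x

/-- The set `CR_S(X)` of complete first return words to `X` in `S`: words of `S` with a
proper prefix in `X`, a proper suffix in `X` and no internal factor in `X`. -/
def CR {A : Type*} (S X : Set (List A)) : Set (List A) :=
  {w ∈ S | (∃ x ∈ X, x <+: w ∧ x ≠ w) ∧ (∃ x ∈ X, x <:+ w ∧ x ≠ w) ∧
    ∀ v : List A, InternalFactor v w → v ∉ X}

end Paper

/-!
Since `X` is a suffix code, a parse `(q, x, p)` of `w` is determined by `p`, so `d_X(w)`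
counts the suffixes of `w` without prefix in `X`; the mirror argument for the prefix code `X`
shows that `d_X` does not decrease under right extension. In a recurrent set of bounded degree,
every nonempty word without prefix in `X` is a proper prefix of a word of `X`: otherwise no
extension of it has a prefix in `X`, and pumping it by recurrence produces words with unboundedly
many parses. The nonempty proper prefixes `p` of `X` have `2 ≤ d_X(p) ≤ n`, and we sort them by
degree. Each class is a suffix code because `d_X` strictly increases along suffixes without prefix
in `X`. It is `S`-maximal because every `w ∈ S` is a suffix of some `z v w ∈ S` of degree `n`,
and the suffixes of `z v w` without prefix in `X` realize every degree from `1` to `n`; the one of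
degree `m` is comparable with `w`.
-/

namespace Paper

variable {A : Type*}

def noPrefixIn (X : Set (List A)) : Set (List A) := {p | ∀ x ∈ X, ¬ x <+: p}

def noSuffixIn (X : Set (List A)) : Set (List A) := {q | ∀ x ∈ X, ¬ x <:+ q}

def suffixesIn (P : Set (List A)) (w : List A) : Set (List A) := {p ∈ P | p <:+ w}

def nonemptyProperPrefixes (X : Set (List A)) : Set (List A) :=
  {p | p ≠ [] ∧ ∃ x ∈ X, p <+: x ∧ p ≠ x}

def properPrefixesOfDegree (X : Set (List A)) (m : ℕ) : Set (List A) :=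
  {p ∈ nonemptyProperPrefixes X | dX X p = m}

section suffixesIn

variable {P : Set (List A)} {p q w : List A}

theorem finite_suffixesIn (P : Set (List A)) (w : List A) : (suffixesIn P w).Finite :=
  w.tails.finite_toSet.subset fun _ hp => (List.mem_tails _ _).2 hp.2

theorem suffixesIn_mono (h : p <:+ w) : suffixesIn P p ⊆ suffixesIn P w :=
  fun _ hq => ⟨hq.1, hq.2.trans h⟩

theorem ncard_suffixesIn_nil_le_one : (suffixesIn P []).ncard ≤ 1 :=
  (Set.ncard_le_one (finite_suffixesIn P [])).2 fun _ ha _ hb =>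
    (List.suffix_nil.1 ha.2).trans (List.suffix_nil.1 hb.2).symm

theorem suffixesIn_cons_subset (a : A) (t : List A) :
    suffixesIn P (a :: t) ⊆ insert (a :: t) (suffixesIn P t) := by
  rintro q ⟨hqP, hq⟩
  rcases List.suffix_cons_iff.1 hq with rfl | hq
  · exact Set.mem_insert _ _
  · exact Or.inr ⟨hqP, hq⟩

theorem ncard_suffixesIn_lt (h : p <:+ q) (hne : p ≠ q) (hq : q ∈ P) :
    (suffixesIn P p).ncard < (suffixesIn P q).ncard := by
  refine Set.ncard_lt_ncard ⟨suffixesIn_mono h, fun hsub => hne ?_⟩ (finite_suffixesIn P q)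
  exact h.eq_of_length (le_antisymm h.length_le (hsub ⟨hq, List.suffix_rfl⟩).2.length_le)

theorem two_le_ncard_suffixesIn (hnil : [] ∈ P) (hw : w ∈ P) (hne : w ≠ []) :
    2 ≤ (suffixesIn P w).ncard := by
  rw [← Set.ncard_pair (Ne.symm hne)]
  refine Set.ncard_le_ncard ?_ (finite_suffixesIn P w)
  rintro q (rfl | rfl)
  exacts [⟨hnil, List.nil_suffix⟩, ⟨hw, List.suffix_rfl⟩]

theorem exists_ncard_suffixesIn_eq {m : ℕ} (hm : 1 ≤ m) :
    ∀ {w : List A}, m ≤ (suffixesIn P w).ncard →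
      ∃ p ∈ suffixesIn P w, (suffixesIn P p).ncard = m
  | [], hw => by
    obtain ⟨p, hp⟩ := Set.nonempty_of_ncard_ne_zero (by omega : (suffixesIn P []).ncard ≠ 0)
    have hle := ncard_suffixesIn_nil_le_one (P := P)
    exact ⟨p, hp, by rw [List.suffix_nil.1 hp.2]; omega⟩
  | a :: t, hw => by
    by_cases ht : m ≤ (suffixesIn P t).ncard
    · obtain ⟨p, hp, hpm⟩ := exists_ncard_suffixesIn_eq hm ht
      exact ⟨p, suffixesIn_mono (List.suffix_cons a t) hp, hpm⟩
    have hle : (suffixesIn P (a :: t)).ncard ≤ (suffixesIn P t).ncard + 1 :=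
      (Set.ncard_le_ncard (suffixesIn_cons_subset a t) ((finite_suffixesIn P t).insert _)).trans
        (Set.ncard_insert_le _ _)
    refine ⟨a :: t, by_contra fun hnot => ht ?_, by omega⟩
    have hsub := (Set.subset_insert_iff_of_notMem hnot).1 (suffixesIn_cons_subset a t)
    exact hw.trans (Set.ncard_le_ncard hsub (finite_suffixesIn P t))

end suffixesIn

section parses

variable {X : Set (List A)}

theorem inStar_nil (X : Set (List A)) : InStar X [] := ⟨[], by simp, rfl⟩

theorem InStar.append_mem {x y : List A} (hx : InStar X x) (hy : y ∈ X) : InStar X (x ++ y) := by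
  obtain ⟨l, hl, rfl⟩ := hx
  exact ⟨l ++ [y], by simpa [or_imp, forall_and] using ⟨hl, hy⟩, by simp⟩

theorem nil_mem_noPrefixIn (hX : [] ∉ X) : [] ∈ noPrefixIn X :=
  fun _ hx h => hX (List.prefix_nil.1 h ▸ hx)

theorem exists_noSuffixIn_append_inStar (hX : [] ∉ X) (u : List A) :
    ∃ q ∈ noSuffixIn X, ∃ x, InStar X x ∧ q ++ x = u := by
  by_cases h : ∃ y ∈ X, y <:+ u
  · obtain ⟨y, hy, u', rfl⟩ := h
    have : u'.length < (u' ++ y).length := by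
      simpa using List.length_pos_iff.2 fun h => hX (h ▸ hy)
    obtain ⟨q, hq, x, hx, rfl⟩ := exists_noSuffixIn_append_inStar hX u'
    exact ⟨q, hq, x ++ y, hx.append_mem hy, by simp⟩
  · exact ⟨u, fun y hy hyu => h ⟨y, hy, hyu⟩, [], inStar_nil X, by simp⟩
termination_by u.length

theorem append_notMem_noSuffixIn {y : List A} (u : List A) (hy : y ∈ X) :
    u ++ y ∉ noSuffixIn X :=
  fun h => h y hy (List.suffix_append u y)

theorem eq_of_append_flatten_eq (hX : SuffixCode X) {l l' : List (List A)} {q q' : List A}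
    (hl : ∀ y ∈ l, y ∈ X) (hl' : ∀ y ∈ l', y ∈ X) (hq : q ∈ noSuffixIn X)
    (hq' : q' ∈ noSuffixIn X) (h : q ++ l.flatten = q' ++ l'.flatten) : q = q' := by
  induction l using List.reverseRecOn generalizing l' q q' with
  | nil =>
    rcases l'.eq_nil_or_concat with rfl | ⟨t', y', rfl⟩
    · simpa using h
    · exact absurd ((by simpa using h : q = q' ++ t'.flatten ++ y') ▸ hq)
        (append_notMem_noSuffixIn _ (hl' y' (by simp)))
  | append_singleton t y ih =>
    have hy := hl y (by simp)
    rcases l'.eq_nil_or_concat with rfl | ⟨t', y', rfl⟩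
    · exact absurd ((by simpa using h.symm : q' = q ++ t.flatten ++ y) ▸ hq')
        (append_notMem_noSuffixIn _ hy)
    have hy' := hl' y' (by simp)
    have h : q ++ t.flatten ++ y = q' ++ t'.flatten ++ y' := by simpa using h
    obtain rfl : y = y' := by
      rcases List.suffix_or_suffix_of_suffix (List.suffix_append _ y)
        (h ▸ List.suffix_append _ y') with hyy | hyy
      exacts [hX.2 y hy y' hy' hyy, (hX.2 y' hy' y hy hyy).symm]
    exact ih (fun z hz => hl z (by simp [hz])) (fun z hz => hl' z (by simp [hz])) hq hq'
      (List.append_cancel_right h)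

theorem image_parses_eq_suffixesIn (hX : [] ∉ X) (w : List A) :
    (fun t => t.2.2) '' Parses X w = suffixesIn (noPrefixIn X) w := by
  ext p
  constructor
  · rintro ⟨⟨q, x, p⟩, ⟨rfl, -, -, hp⟩, rfl⟩
    exact ⟨hp, List.suffix_append _ _⟩
  · rintro ⟨hp, u, rfl⟩
    obtain ⟨q, hq, x, hx, rfl⟩ := exists_noSuffixIn_append_inStar hX u
    exact ⟨(q, x, p), ⟨rfl, hq, hx, hp⟩, rfl⟩

theorem injOn_parses_snd_snd (hX : SuffixCode X) (w : List A) :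
    Set.InjOn (fun t => t.2.2) (Parses X w) := by
  rintro ⟨q, x, p⟩ ⟨hw, hq, ⟨l, hl, rfl⟩, -⟩ ⟨q', x', p'⟩ ⟨hw', hq', ⟨l', hl', rfl⟩, -⟩
    (rfl : p = p')
  have h : q ++ l.flatten = q' ++ l'.flatten := List.append_cancel_right (hw.trans hw'.symm)
  obtain rfl := eq_of_append_flatten_eq hX hl hl' hq hq' h
  simp [List.append_cancel_left h]

theorem dX_eq_ncard_suffixesIn (hX : SuffixCode X) (w : List A) :
    dX X w = (suffixesIn (noPrefixIn X) w).ncard := by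
  rw [dX, ← image_parses_eq_suffixesIn hX.1, (injOn_parses_snd_snd hX w).ncard_image]

theorem mem_parses_iff {w : List A} {t : List A × List A × List A} :
    t ∈ Parses X w ↔ t.1 ++ t.2.1 ++ t.2.2 = w ∧ t.1 ∈ noSuffixIn X ∧ InStar X t.2.1 ∧
      t.2.2 ∈ noPrefixIn X :=
  Iff.rfl

theorem InStar.reverse {x : List A} (hx : InStar X x) : InStar (List.reverse '' X) x.reverse := by
  obtain ⟨l, hl, rfl⟩ := hx
  refine ⟨(l.map List.reverse).reverse, ?_, List.reverse_flatten.symm⟩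
  simpa using fun y hy => ⟨y.reverse, hl _ hy, by simp⟩

theorem inStar_reverse_image_iff {x : List A} :
    InStar (List.reverse '' X) x ↔ InStar X x.reverse :=
  ⟨fun h => by simpa [Set.image_image] using h.reverse, fun h => by simpa using h.reverse⟩

theorem mem_noSuffixIn_reverse_image_iff {q : List A} :
    q ∈ noSuffixIn (List.reverse '' X) ↔ q.reverse ∈ noPrefixIn X := by
  simp [noSuffixIn, noPrefixIn, ← List.reverse_suffix]

theorem mem_noPrefixIn_reverse_image_iff {p : List A} :
    p ∈ noPrefixIn (List.reverse '' X) ↔ p.reverse ∈ noSuffixIn X := by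
  simp [noSuffixIn, noPrefixIn, ← List.reverse_prefix]

theorem suffixCode_reverse_image (hX : PrefixCode X) : SuffixCode (List.reverse '' X) := by
  refine ⟨by simpa using hX.1, ?_⟩
  simp only [Set.forall_mem_image, List.reverse_suffix, List.reverse_inj]
  exact hX.2

theorem dX_reverse_image (w : List A) : dX (List.reverse '' X) w.reverse = dX X w := by
  let rev : List A × List A × List A → List A × List A × List A :=
    fun t => (t.2.2.reverse, t.2.1.reverse, t.1.reverse)
  have hrev : Function.Involutive rev := fun t => by simp [rev]
  have : Parses (List.reverse '' X) w.reverse = rev '' Parses X w := by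
    rw [hrev.image_eq_preimage_symm]
    ext ⟨q, x, p⟩
    simp only [Set.mem_preimage, mem_parses_iff, rev, mem_noSuffixIn_reverse_image_iff,
      mem_noPrefixIn_reverse_image_iff, inStar_reverse_image_iff]
    rw [← List.reverse_inj, List.reverse_reverse]
    simp only [List.reverse_append, List.append_assoc]
    tauto
  rw [dX, dX, this, Set.ncard_image_of_injective _ hrev.injective]

theorem dX_le_dX_append (hX : PrefixCode X) (u s : List A) : dX X u ≤ dX X (u ++ s) := by
  rw [← dX_reverse_image, ← dX_reverse_image (u ++ s), List.reverse_append,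
    dX_eq_ncard_suffixesIn (suffixCode_reverse_image hX),
    dX_eq_ncard_suffixesIn (suffixCode_reverse_image hX)]
  exact Set.ncard_le_ncard (suffixesIn_mono (List.suffix_append _ _)) (finite_suffixesIn _ _)

end parses

section recurrent

variable {S X P : Set (List A)} {n m : ℕ} {w : List A}

theorem exists_le_ncard_suffixesIn (hS : Recurrent S) (hw : w ∈ S) (hne : w ≠ [])
    (hP : ∀ t, w <+: t → t ∈ P) (k : ℕ) : ∃ u ∈ S, k ≤ (suffixesIn P u).ncard := by
  induction k with
  | zero => exact ⟨w, hw, Nat.zero_le _⟩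
  | succ k ih =>
    obtain ⟨u, hu, hk⟩ := ih
    obtain ⟨v, hv⟩ := hS.2.2 w hw u hu
    have hnotmem : w ++ v ++ u ∉ suffixesIn P u := fun h => by
      have := h.2.length_le
      simp only [List.length_append] at this
      exact hne (List.eq_nil_of_length_eq_zero (by omega))
    have hsub : insert (w ++ v ++ u) (suffixesIn P u) ⊆ suffixesIn P (w ++ v ++ u) :=
      Set.insert_subset ⟨hP _ (by simp), List.suffix_rfl⟩
        (suffixesIn_mono (List.suffix_append _ _))
    refine ⟨w ++ v ++ u, hv, ?_⟩
    calc k + 1 ≤ (insert (w ++ v ++ u) (suffixesIn P u)).ncard := by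
          rw [Set.ncard_insert_of_notMem hnotmem (finite_suffixesIn P u)]; omega
      _ ≤ _ := Set.ncard_le_ncard hsub (finite_suffixesIn _ _)

theorem mem_nonemptyProperPrefixes_of_mem_noPrefixIn (hS : Recurrent S) (hX : SuffixCode X)
    (hn : ∀ u ∈ S, dX X u ≤ n) (hw : w ∈ S) (hne : w ≠ []) (hwP : w ∈ noPrefixIn X) :
    w ∈ nonemptyProperPrefixes X := by
  refine ⟨hne, by_contra fun hnot => ?_⟩
  push Not at hnot
  have hP : ∀ t, w <+: t → t ∈ noPrefixIn X := fun t hwt x hx hxt => by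
    rcases List.prefix_or_prefix_of_prefix hxt hwt with h | h
    · exact hwP x hx h
    · exact hwP x hx (hnot x hx h ▸ List.prefix_rfl)
  obtain ⟨u, hu, hk⟩ := exists_le_ncard_suffixesIn hS hw hne hP (n + 1)
  have := hn u hu
  rw [dX_eq_ncard_suffixesIn hX] at this
  omega

theorem exists_suffix_mem_properPrefixesOfDegree (hS : Recurrent S) (hX : SuffixCode X)
    (hn : ∀ u ∈ S, dX X u ≤ n) (hw : w ∈ S) (hm : 2 ≤ m) (hmw : m ≤ dX X w) :
    ∃ p ∈ properPrefixesOfDegree X m, p <:+ w := by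
  rw [dX_eq_ncard_suffixesIn hX] at hmw
  obtain ⟨p, ⟨hpP, hpw⟩, hpm⟩ := exists_ncard_suffixesIn_eq (by omega) hmw
  have hne : p ≠ [] := by
    rintro rfl
    have := ncard_suffixesIn_nil_le_one (P := noPrefixIn X)
    omega
  have hpS : p ∈ S := hS.2.1 p w hpw.isInfix hw
  exact ⟨p, ⟨mem_nonemptyProperPrefixes_of_mem_noPrefixIn hS hX hn hpS hne hpP,
    by rw [dX_eq_ncard_suffixesIn hX, hpm]⟩, hpw⟩

theorem nonemptyProperPrefixes_subset (hS : Factorial S) (hXS : X ⊆ S) :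
    nonemptyProperPrefixes X ⊆ S :=
  fun _ ⟨_, _, hx, hpx, _⟩ => hS _ _ hpx.isInfix (hXS hx)

theorem nonemptyProperPrefixes_subset_noPrefixIn (hX : PrefixCode X) :
    nonemptyProperPrefixes X ⊆ noPrefixIn X := by
  rintro p ⟨-, x, hx, hpx, hne⟩ y hy hyp
  obtain rfl := hX.2 y hy x hx (hyp.trans hpx)
  exact hne (hpx.eq_of_length (le_antisymm hpx.length_le hyp.length_le))

theorem two_le_dX (hX : BifixCode X) {p : List A} (hp : p ∈ nonemptyProperPrefixes X) :
    2 ≤ dX X p := by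
  rw [dX_eq_ncard_suffixesIn hX.2]
  exact two_le_ncard_suffixesIn (nil_mem_noPrefixIn hX.2.1)
    (nonemptyProperPrefixes_subset_noPrefixIn hX.1 hp) hp.1

theorem suffixCode_properPrefixesOfDegree (hX : BifixCode X) (m : ℕ) :
    SuffixCode (properPrefixesOfDegree X m) := by
  refine ⟨fun h => h.1.1 rfl, ?_⟩
  rintro u ⟨-, hdu⟩ v ⟨hv, hdv⟩ huv
  by_contra hne
  have := ncard_suffixesIn_lt huv hne (nonemptyProperPrefixes_subset_noPrefixIn hX.1 hv)
  rw [← dX_eq_ncard_suffixesIn hX.2, ← dX_eq_ncard_suffixesIn hX.2] at this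
  omega

theorem maxSuffixCode_of_forall_suffix_or_suffix {Y : Set (List A)} (hYS : Y ⊆ S)
    (hY : SuffixCode Y) (h : ∀ w ∈ S, ∃ y ∈ Y, y <:+ w ∨ w <:+ y) :
    MaxSuffixCode S Y := by
  refine ⟨hYS, hY, fun Z hZ hZS hYZ => hYZ.antisymm fun w hw => ?_⟩
  obtain ⟨y, hy, hyw | hwy⟩ := h w (hZS hw)
  · rwa [← hZ.2 y (hYZ hy) w hw hyw]
  · rwa [hZ.2 w hw y (hYZ hy) hwy]

theorem maxSuffixCode_properPrefixesOfDegree (hS : Recurrent S) (hXS : X ⊆ S)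
    (hX : BifixCode X) (hdeg : HasDegree S X n) (hm : 2 ≤ m) (hmn : m ≤ n) :
    MaxSuffixCode S (properPrefixesOfDegree X m) := by
  refine maxSuffixCode_of_forall_suffix_or_suffix
    (fun p hp => nonemptyProperPrefixes_subset hS.2.1 hXS hp.1)
    (suffixCode_properPrefixesOfDegree hX m) fun w hw => ?_
  obtain ⟨z, hz, hzn⟩ := hdeg.1
  obtain ⟨v, hv⟩ := hS.2.2 z hz w hw
  have hmW : m ≤ dX X (z ++ v ++ w) := by
    have := dX_le_dX_append hX.1 z (v ++ w)
    rw [hzn, ← List.append_assoc] at this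
    omega
  obtain ⟨p, hp, hpW⟩ := exists_suffix_mem_properPrefixesOfDegree hS hX.2
    (fun u hu => hdeg.2 ⟨u, hu, rfl⟩) hv hm hmW
  exact ⟨p, hp, List.suffix_or_suffix_of_suffix hpW (List.suffix_append _ _)⟩

end recurrent

end Paper

open Paper in
theorem proper_prefixes_union_of_maximal_suffix_codes_general
    {A : Type*} (S X : Set (List A)) (n : ℕ)
    (hS : Recurrent S) (hX : MaxBifixCode S X)
    (hdeg : HasDegree S X n) :
    ∃ Y : Fin (n - 1) → Set (List A),
      (∀ i, MaxSuffixCode S (Y i)) ∧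
      Pairwise (Function.onFun Disjoint Y) ∧
      (⋃ i, Y i) = {p : List A | p ≠ [] ∧ ∃ x ∈ X, p <+: x ∧ p ≠ x} := by
  obtain ⟨hXS, hXbifix, -⟩ := hX
  refine ⟨fun i => properPrefixesOfDegree X (i + 2), fun i => ?_, fun i j hij => ?_, ?_⟩
  · exact maxSuffixCode_properPrefixesOfDegree hS hXS hXbifix hdeg le_add_self (by omega)
  · refine Set.disjoint_left.2 fun p hpi hpj => hij (Fin.ext ?_)
    have := hpi.2.symm.trans hpj.2
    omega
  · ext p
    refine ⟨fun hp => (Set.mem_iUnion.1 hp).elim fun _ hpi => hpi.1, fun hp => ?_⟩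
    have h2 := two_le_dX hXbifix hp
    have hn : dX X p ≤ n := hdeg.2 ⟨p, nonemptyProperPrefixes_subset hS.2.1 hXS hp, rfl⟩
    exact Set.mem_iUnion.2 ⟨⟨dX X p - 2, by omega⟩, hp, by simp only; omega⟩

open Paper in
/-- For a recurrent set `S` and a finite `S`-maximal bifix code `X` of `S`-degree `n`,
the set of nonempty proper prefixes of `X` is a disjoint union of `n - 1`
`S`-maximal suffix codes. -/
theorem proper_prefixes_union_of_maximal_suffix_codes
    {A : Type*} [Fintype A] (S X : Set (List A)) (n : ℕ)
    (hS : Recurrent S) (hXfin : X.Finite) (hX : MaxBifixCode S X)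
    (hdeg : HasDegree S X n) :
    ∃ Y : Fin (n - 1) → Set (List A),
      (∀ i, MaxSuffixCode S (Y i)) ∧
      Pairwise (Function.onFun Disjoint Y) ∧
      (⋃ i, Y i) = {p : List A | p ≠ [] ∧ ∃ x ∈ X, p <+: x ∧ p ≠ x} :=
  proper_prefixes_union_of_maximal_suffix_codes_general S X n hS hX hdeg
end

section
/- Let S be a uniformly recurrent set of words over a finite alphabet A and let X ⊆ S be a finite set of nonempty words. Then the set CR_S(X) of complete first return words to X in S is finite. -/
/-!
Fix `x ∈ X`. By uniform recurrence `x` occurs in every word of `S` longer than some `n`.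
A word `w = a m b` of `CR_S(X)` with `|w| > n + 1` would have its middle part `m ∈ S` of
length at least `n`, so `x` would be an internal factor of `w`. Hence the words of `CR_S(X)`
have bounded length, and there are finitely many of them over a finite alphabet.
-/

namespace Paper

variable {A : Type*}

theorem UniformlyRecurrent.exists_infix_of_le_length {S : Set (List A)}
    (hS : UniformlyRecurrent S) {u : List A} (hu : u ∈ S) :
    ∃ n, ∀ w ∈ S, n ≤ w.length → u <:+: w := by
  obtain ⟨n, -, hn⟩ := hS.2.2 u hu
  refine ⟨n, fun w hw hlen => ?_⟩
  have hprefix : w.take n <+: w := w.take_prefix n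
  exact (hn _ (hS.2.1 _ _ hprefix.isInfix hw) (by simp [hlen])).trans hprefix.isInfix

theorem internalFactor_of_infix {v m : List A} (h : v <:+: m) (a b : A) :
    InternalFactor v (a :: (m ++ [b])) := by
  obtain ⟨l, r, rfl⟩ := h
  exact ⟨a :: l, r ++ [b], List.cons_ne_nil _ _, by simp, by simp⟩

theorem length_le_of_mem_CR {S X : Set (List A)} (hS : Factorial S) {x : List A} (hx : x ∈ X)
    {n : ℕ} (hn : ∀ w ∈ S, n ≤ w.length → x <:+: w) {w : List A} (hw : w ∈ CR S X) :
    w.length ≤ n + 1 := by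
  obtain ⟨hwS, -, -, hnoInternal⟩ := hw
  by_contra! hlen
  obtain ⟨a, m, b, rfl⟩ : ∃ a m b, w = a :: (m ++ [b]) := by
    obtain _ | ⟨a, t⟩ := w
    · simp at hlen
    obtain rfl | ⟨m, b, rfl⟩ := t.eq_nil_or_concat'
    · simp at hlen
    exact ⟨a, m, b, rfl⟩
  have hmS : m ∈ S := hS m _ ⟨[a], [b], by simp⟩ hwS
  have hxm : x <:+: m := hn m hmS (by simp at hlen; omega)
  exact hnoInternal x (internalFactor_of_infix hxm a b) hx

end Paper

open Paper in
theorem CR_finite_of_uniformly_recurrent_general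
    {A : Type*} [Fintype A] (S X : Set (List A))
    (hS : UniformlyRecurrent S) (hXS : X ⊆ S) :
    (CR S X).Finite := by
  rcases X.eq_empty_or_nonempty with rfl | ⟨x, hx⟩
  · exact Set.finite_empty.subset fun _ ⟨_, ⟨_, hmem, _⟩, _⟩ => hmem
  obtain ⟨n, hn⟩ := hS.exists_infix_of_le_length (hXS hx)
  exact (List.finite_length_le A (n + 1)).subset
    fun w hw => length_le_of_mem_CR hS.2.1 hx hn hw

open Paper in
/-- For a uniformly recurrent set `S` and a finite set `X ⊆ S` of nonempty words,
the set `CR_S(X)` of complete first return words to `X` is finite. -/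
theorem CR_finite_of_uniformly_recurrent
    {A : Type*} [Fintype A] (S X : Set (List A))
    (hS : UniformlyRecurrent S) (hXS : X ⊆ S) (hX : ∀ x ∈ X, x ≠ [])
    (hXfin : X.Finite) :
    (CR S X).Finite :=
  CR_finite_of_uniformly_recurrent_general S X hS hXS
end

section
/- Let S be a neutral set over a finite alphabet A, let X ⊆ S be a finite S-maximal suffix code and let Y ⊆ S be a finite S-maximal prefix code. Then for every w ∈ S one has m_S^{X,Y}(w) = m_S(w), where m_S^{X,Y}(w) = e_S^{X,Y}(w) − ℓ_S^X(w) − r_S^Y(w) + 1 with ℓ_S^X(w) = Card{x ∈ X | xw ∈ S}, r_S^Y(w) = Card{y ∈ Y | wy ∈ S} and e_S^{X,Y}(w) = Card{(x,y) ∈ X × Y | xwy ∈ S}. -/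
/-!
Call `f : List A → M` right harmonic on `S` if it vanishes off `S` and `∑_b f(vb) = f(v)` for
every nonempty `v ∈ S`. A finite `S`-maximal prefix code `Y` is the set of leaves of a finite tree
in which the children of an inner node `v` are the words `vb ∈ S`, so summing a right harmonic `f`
over `Y` gives `∑_b f(b)`; dually for suffix codes and left harmonic functions.

Neutrality of `S` makes `y ↦ ℓ(zy) - [zy ∈ S]` right harmonic for every word `z`; this
replaces `Y` by the alphabet and gives `e^{A,Y}(z) - r^Y(z) = e(z) - r(z)`. Using it for `z = vw`,
`x ↦ r^Y(xw) - [xw ∈ S]` is left harmonic, which replaces `X` by the alphabet as well.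
-/

namespace Paper

open Finset

variable {A : Type*}

theorem _root_.List.IsPrefix.exists_concat_prefix {v y : List A} (h : v <+: y) (hne : v ≠ y) :
    ∃ b, v ++ [b] <+: y := by
  obtain ⟨t, rfl⟩ := h
  obtain ⟨b, t, rfl⟩ := List.exists_cons_of_ne_nil (fun ht : t = [] => by simp [ht] at hne)
  exact ⟨b, t, by simp⟩

theorem eq_of_concat_prefix_of_concat_prefix {v y : List A} {b c : A} (hb : v ++ [b] <+: y)
    (hc : v ++ [c] <+: y) : b = c := by
  have : v ++ [b] = v ++ [c] :=
    (List.prefix_or_prefix_of_prefix hb hc).elim (·.eq_of_length (by simp))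
      (fun h => (h.eq_of_length (by simp)).symm)
  simpa using this

theorem sum_filter_prefix_eq_sum_sum_concat [Fintype A] [DecidableEq A] {M : Type*}
    [AddCommMonoid M] {Y : Finset (List A)} {v : List A} (hv : v ∉ Y) (f : List A → M) :
    ∑ y ∈ Y with v <+: y, f y = ∑ b, ∑ y ∈ Y with v ++ [b] <+: y, f y := by
  rw [← sum_biUnion]
  · congr 1
    ext y
    simp only [mem_filter, mem_biUnion, mem_univ, true_and]
    constructor
    · rintro ⟨hy, hvy⟩
      obtain ⟨b, hb⟩ := hvy.exists_concat_prefix (ne_of_mem_of_not_mem hy hv).symm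
      exact ⟨b, hy, hb⟩
    · rintro ⟨b, hy, hb⟩
      exact ⟨hy, (List.prefix_append v [b]).trans hb⟩
  · intro b _ c _ hbc
    simp only [Function.onFun, disjoint_left, mem_filter]
    rintro y ⟨-, hb⟩ ⟨-, hc⟩
    exact hbc (eq_of_concat_prefix_of_concat_prefix hb hc)

theorem MaxPrefixCode.exists_prefix_or_prefix {S Y : Set (List A)} (hY : MaxPrefixCode S Y)
    {v : List A} (hv : v ∈ S) (hv0 : v ≠ []) : ∃ y ∈ Y, y <+: v ∨ v <+: y := by
  by_contra! h
  have hcode : PrefixCode (insert v Y) := by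
    refine ⟨by simp [hv0.symm, hY.2.1.1], ?_⟩
    rintro u (rfl | hu) u' (rfl | hu') hpre
    · rfl
    · exact absurd hpre (h u' hu').2
    · exact absurd hpre (h u hu).1
    · exact hY.2.1.2 u hu u' hu' hpre
  have := hY.2.2 _ hcode (Set.insert_subset hv hY.1) (Set.subset_insert v Y)
  exact (h v (this ▸ Set.mem_insert v Y)).1 List.prefix_rfl

section Reverse

variable {S X : Set (List A)}

theorem SuffixCode.preimage_reverse (hX : SuffixCode X) : PrefixCode (List.reverse ⁻¹' X) :=
  ⟨by simpa using hX.1, fun u hu v hv h =>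
    List.reverse_inj.1 (hX.2 _ hu _ hv (List.reverse_suffix.2 h))⟩

theorem PrefixCode.preimage_reverse (hX : PrefixCode X) : SuffixCode (List.reverse ⁻¹' X) :=
  ⟨by simpa using hX.1, fun u hu v hv h =>
    List.reverse_inj.1 (hX.2 _ hu _ hv (List.reverse_prefix.2 h))⟩

theorem Factorial.preimage_reverse (hS : Factorial S) : Factorial (List.reverse ⁻¹' S) :=
  fun _ _ h hv => hS _ _ (List.reverse_infix.2 h) hv

theorem MaxSuffixCode.preimage_reverse (hX : MaxSuffixCode S X) :
    MaxPrefixCode (List.reverse ⁻¹' S) (List.reverse ⁻¹' X) := by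
  refine ⟨fun u hu => hX.1 hu, hX.2.1.preimage_reverse, fun Z hZ hZS hXZ => ?_⟩
  have := hX.2.2 (List.reverse ⁻¹' Z) hZ.preimage_reverse (fun u hu => by simpa using hZS hu)
    (fun u hu => hXZ (by simpa using hu))
  rw [this, Set.preimage_preimage]
  simp

end Reverse

section HarmonicSum

variable [Fintype A] {M : Type*} [AddCommMonoid M] {S : Set (List A)} {f : List A → M}

theorem MaxPrefixCode.sum_filter_prefix_eq [DecidableEq A] {Y : Finset (List A)}
    (hS : Factorial S) (hY : MaxPrefixCode S ↑Y) (hf0 : ∀ v ∉ S, f v = 0)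
    (hf : ∀ v ∈ S, v ≠ [] → ∑ b, f (v ++ [b]) = f v)
    (v : List A) (hv0 : v ≠ []) (hvY : ∀ y ∈ Y, y <+: v → y = v) :
    ∑ y ∈ Y with v <+: y, f y = f v := by
  by_cases hvS : v ∉ S
  · refine (sum_eq_zero fun y hy => ?_).trans (hf0 v hvS).symm
    rw [mem_filter] at hy
    exact absurd (hS v y hy.2.isInfix (hY.1 hy.1)) hvS
  by_cases hv : v ∈ Y
  · rw [sum_filter, sum_eq_single_of_mem v hv fun y hy hne =>
      if_neg fun h => hne (hY.2.1.2 v hv y hy h).symm, if_pos List.prefix_rfl]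
  obtain ⟨y, hy, hyv | hvy⟩ := hY.exists_prefix_or_prefix (not_not.1 hvS) hv0
  · exact absurd (hvY y hy hyv ▸ hy) hv
  have hlt : v.length < y.length :=
    hvy.length_le.lt_of_ne fun h => ne_of_mem_of_not_mem hy hv (hvy.eq_of_length h).symm
  rw [sum_filter_prefix_eq_sum_sum_concat hv, ← hf v (not_not.1 hvS) hv0]
  refine sum_congr rfl fun b _ => hY.sum_filter_prefix_eq hS hf0 hf (v ++ [b]) (by simp) ?_
  intro y' hy' hpre
  rcases List.prefix_concat_iff.1 hpre with h | h
  · exact h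
  · exact absurd (hvY y' hy' h ▸ hy') hv
termination_by Y.sup List.length - v.length
decreasing_by
  have := le_sup (f := List.length) hy
  simp only [List.length_append, List.length_singleton]
  omega

theorem MaxPrefixCode.sum_eq_sum_letters {Y : Finset (List A)} (hS : Factorial S)
    (hY : MaxPrefixCode S ↑Y) (hf0 : ∀ v ∉ S, f v = 0)
    (hf : ∀ v ∈ S, v ≠ [] → ∑ b, f (v ++ [b]) = f v) :
    ∑ y ∈ Y, f y = ∑ b, f [b] := by
  classical
  have h := sum_filter_prefix_eq_sum_sum_concat hY.2.1.1 f
  simp only [List.nil_prefix, filter_true, List.nil_append] at h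
  rw [h]
  refine sum_congr rfl fun b _ => hY.sum_filter_prefix_eq hS hf0 hf [b] (by simp) fun y hy hyb => ?_
  rcases (List.prefix_concat_iff (l₂ := [])).1 hyb with h | h
  · exact h
  · exact absurd (List.prefix_nil.1 h ▸ hy) hY.2.1.1

theorem MaxSuffixCode.sum_eq_sum_letters {X : Finset (List A)} (hS : Factorial S)
    (hX : MaxSuffixCode S ↑X) (hf0 : ∀ v ∉ S, f v = 0)
    (hf : ∀ v ∈ S, v ≠ [] → ∑ a, f (a :: v) = f v) :
    ∑ x ∈ X, f x = ∑ a, f [a] := by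
  classical
  have hXr : MaxPrefixCode (List.reverse ⁻¹' S) ↑(X.image List.reverse) := by
    rw [coe_image, List.reverse_involutive.image_eq_preimage_symm]
    exact hX.preimage_reverse
  have := hXr.sum_eq_sum_letters (f := f ∘ List.reverse) hS.preimage_reverse
    (fun v hv => hf0 _ hv) (fun v hv hv0 => by simpa using hf _ hv (by simpa using hv0))
  simpa [sum_image] using this

end HarmonicSum

section Counting

variable {S : Set (List A)}

noncomputable def ind (S : Set (List A)) : List A → ℤ := S.indicator 1

theorem Factorial.ind_eq_zero (hS : Factorial S) {u v : List A} (h : u <:+: v) (hu : u ∉ S) :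
    ind S v = 0 :=
  Set.indicator_of_notMem (fun hv => hu (hS u v h hv)) _

theorem ncard_sep_eq_sum {α : Type*} {T : Set α} (hT : T.Finite) (P : α → List A) :
    ({t ∈ T | P t ∈ S}.ncard : ℤ) = ∑ t ∈ hT.toFinset, ind S (P t) := by
  classical
  have : {t ∈ T | P t ∈ S} = ↑(hT.toFinset.filter (P · ∈ S)) := by ext; simp
  rw [this, Set.ncard_coe_finset, natCast_card_filter]
  simp [ind, Set.indicator_apply]

theorem ncard_preimage_eq_sum {α : Type*} [Fintype α] (P : α → List A) :
    ((P ⁻¹' S).ncard : ℤ) = ∑ t, ind S (P t) := by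
  simpa [Set.preimage] using ncard_sep_eq_sum Set.finite_univ P

theorem ncard_prod_sep_eq_sum {X Y : Set (List A)} (hX : X.Finite) (hY : Y.Finite) (w : List A) :
    ({p : List A × List A | p.1 ∈ X ∧ p.2 ∈ Y ∧ p.1 ++ w ++ p.2 ∈ S}.ncard : ℤ)
      = ∑ x ∈ hX.toFinset, ∑ y ∈ hY.toFinset, ind S (x ++ w ++ y) := by
  have : {p : List A × List A | p.1 ∈ X ∧ p.2 ∈ Y ∧ p.1 ++ w ++ p.2 ∈ S}
      = {p ∈ X ×ˢ Y | p.1 ++ w ++ p.2 ∈ S} := Set.ext fun _ => and_assoc.symm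
  rw [this, ncard_sep_eq_sum (hX.prod hY), ← Set.Finite.toFinset_prod, sum_product]

variable [Fintype A]

noncomputable def countL (S : Set (List A)) (v : List A) : ℤ := ∑ a, ind S (a :: v)

noncomputable def countR (S : Set (List A)) (v : List A) : ℤ := ∑ b, ind S (v ++ [b])

noncomputable def countE (S : Set (List A)) (v : List A) : ℤ := ∑ b, countL S (v ++ [b])

theorem mS_eq_count (w : List A) : mS S w = countE S w - countL S w - countR S w + 1 := by
  have hE : ((extE S w).ncard : ℤ) = countE S w :=
    (ncard_preimage_eq_sum fun p : A × A => p.1 :: (w ++ [p.2])).trans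
      (by rw [Fintype.sum_prod_type, sum_comm]; rfl)
  have hL : ((extL S w).ncard : ℤ) = countL S w := ncard_preimage_eq_sum (· :: w)
  have hR : ((extR S w).ncard : ℤ) = countR S w := ncard_preimage_eq_sum (w ++ [·])
  rw [mS, hE, hL, hR]

theorem Factorial.countL_eq_zero (hS : Factorial S) {v : List A} (hv : v ∉ S) : countL S v = 0 :=
  sum_eq_zero fun a _ => hS.ind_eq_zero (List.suffix_cons a v).isInfix hv

theorem Factorial.countR_eq_zero (hS : Factorial S) {v : List A} (hv : v ∉ S) : countR S v = 0 :=
  sum_eq_zero fun b _ => hS.ind_eq_zero (List.prefix_append v [b]).isInfix hv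

theorem Neutral.countE_eq (hN : Neutral S) {v : List A} (hv0 : v ≠ []) :
    countE S v = countL S v + countR S v - ind S v := by
  by_cases hv : v ∈ S
  · have := hN.2 v hv hv0
    rw [mS_eq_count] at this
    rw [ind, Set.indicator_of_mem hv]
    simp only [Pi.one_apply]
    linarith
  · have hvb : ∀ b, v ++ [b] ∉ S := fun b h =>
      hv (hN.1 _ _ (List.prefix_append v [b]).isInfix h)
    rw [countE, sum_eq_zero fun b _ => hN.1.countL_eq_zero (hvb b), hN.1.countL_eq_zero hv,
      hN.1.countR_eq_zero hv, ind, Set.indicator_of_notMem hv]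
    ring

end Counting

section Extensions

variable [Fintype A] {S : Set (List A)} {X Y : Finset (List A)}

theorem MaxPrefixCode.sum_countL_append_sub_ind (hN : Neutral S) (hY : MaxPrefixCode S ↑Y)
    (z : List A) :
    ∑ y ∈ Y, (countL S (z ++ y) - ind S (z ++ y)) = countE S z - countR S z := by
  have hf0 : ∀ v ∉ S, countL S (z ++ v) - ind S (z ++ v) = 0 := fun v hv => by
    have hzv : z ++ v ∉ S := fun h => hv (hN.1 _ _ (List.suffix_append z v).isInfix h)
    rw [hN.1.countL_eq_zero hzv, ind, Set.indicator_of_notMem hzv, sub_zero]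
  have hf : ∀ v ∈ S, v ≠ [] →
      ∑ b, (countL S (z ++ (v ++ [b])) - ind S (z ++ (v ++ [b])))
        = countL S (z ++ v) - ind S (z ++ v) := fun v _ hv0 => by
    simp only [← List.append_assoc]
    rw [sum_sub_distrib]
    change countE S (z ++ v) - countR S (z ++ v) = _
    rw [hN.countE_eq (by simp [hv0])]
    ring
  rw [hY.sum_eq_sum_letters hN.1 hf0 hf, sum_sub_distrib]
  rfl

theorem sum_sum_ind_cons_sub_ind (S : Set (List A)) (Y : Finset (List A)) (u : List A) :
    ∑ a, (∑ y ∈ Y, ind S (a :: (u ++ y)) - ind S (a :: u))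
      = ∑ y ∈ Y, countL S (u ++ y) - countL S u := by
  rw [sum_sub_distrib, sum_comm]
  rfl

theorem MaxSuffixCode.sum_sum_ind_sub_ind (hN : Neutral S) (hX : MaxSuffixCode S ↑X)
    (hY : MaxPrefixCode S ↑Y) (z : List A) :
    ∑ x ∈ X, (∑ y ∈ Y, ind S (x ++ z ++ y) - ind S (x ++ z))
      = ∑ y ∈ Y, countL S (z ++ y) - countL S z := by
  have hf0 : ∀ v ∉ S, ∑ y ∈ Y, ind S (v ++ z ++ y) - ind S (v ++ z) = 0 := fun v hv => by
    have hvz : v <+: v ++ z := List.prefix_append v z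
    rw [sum_eq_zero fun y _ => hN.1.ind_eq_zero (hvz.trans (List.prefix_append _ y)).isInfix hv,
      hN.1.ind_eq_zero hvz.isInfix hv, sub_zero]
  have hf : ∀ v ∈ S, v ≠ [] →
      ∑ a, (∑ y ∈ Y, ind S (a :: v ++ z ++ y) - ind S (a :: v ++ z))
        = ∑ y ∈ Y, ind S (v ++ z ++ y) - ind S (v ++ z) := fun v _ hv0 => by
    have hY' := hY.sum_countL_append_sub_ind hN (v ++ z)
    rw [sum_sub_distrib, hN.countE_eq (by simp [hv0])] at hY'
    simp only [List.cons_append]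
    rw [sum_sum_ind_cons_sub_ind]
    linarith
  rw [hX.sum_eq_sum_letters hN.1 hf0 hf]
  exact sum_sum_ind_cons_sub_ind S Y z

noncomputable def mXY (S : Set (List A)) (X Y : Finset (List A)) (w : List A) : ℤ :=
  ∑ x ∈ X, ∑ y ∈ Y, ind S (x ++ w ++ y) - ∑ x ∈ X, ind S (x ++ w)
    - ∑ y ∈ Y, ind S (w ++ y) + 1

theorem Neutral.mXY_eq_mS (hN : Neutral S) (hX : MaxSuffixCode S ↑X) (hY : MaxPrefixCode S ↑Y)
    (w : List A) : mXY S X Y w = mS S w := by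
  have hleft := hX.sum_sum_ind_sub_ind hN hY w
  have hright := hY.sum_countL_append_sub_ind hN w
  rw [sum_sub_distrib] at hleft hright
  rw [mXY, mS_eq_count]
  linarith

end Extensions

end Paper

open Paper in
/-- Let `S` be a neutral set, `X` a finite `S`-maximal suffix code and `Y` a finite
`S`-maximal prefix code. Then `m_S^{X,Y}(w) = m_S(w)` for every `w ∈ S`, where
`m_S^{X,Y}(w) = e_S^{X,Y}(w) - ℓ_S^X(w) - r_S^Y(w) + 1`. -/
theorem m_XY_eq_m
    {A : Type*} [Fintype A] (S X Y : Set (List A))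
    (hN : Neutral S)
    (hXfin : X.Finite) (hX : MaxSuffixCode S X)
    (hYfin : Y.Finite) (hY : MaxPrefixCode S Y) :
    ∀ w ∈ S,
      (({p : List A × List A | p.1 ∈ X ∧ p.2 ∈ Y ∧ p.1 ++ w ++ p.2 ∈ S}.ncard : ℤ)
          - ({x ∈ X | x ++ w ∈ S}.ncard : ℤ)
          - ({y ∈ Y | w ++ y ∈ S}.ncard : ℤ) + 1)
        = mS S w := by
  intro w _
  rw [ncard_prod_sep_eq_sum hXfin hYfin, ncard_sep_eq_sum hXfin, ncard_sep_eq_sum hYfin]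
  rw [← hXfin.coe_toFinset] at hX
  rw [← hYfin.coe_toFinset] at hY
  exact hN.mXY_eq_mS hX hY w
end

section
/- Let S be a recurrent neutral set over a finite alphabet A, let X ⊆ S be a finite S-maximal bifix code, and let f : B* → A* be a coding morphism for X (a morphism mapping an alphabet B bijectively onto X). Then the set U = f^{-1}(S) is a neutral set with χ(U) = χ(S). -/
/-!
Around a word `u`, the decoding `f⁻¹(S)` sees exactly the pairs `(x, y) ∈ X × X` with
`x f(u) y ∈ S`, so `m_{f⁻¹(S)}(u) = m_{X,X}(f u)`, where `m_{X,Y}` (`mCode`) is `m_S` with the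
letters extending a word on the left replaced by the words of `X`, and those on the right by the
words of `Y`.

A finite `S`-maximal bifix code of a recurrent set is complete on both sides: every nonempty word
of `S` is comparable with a word of `X` for the prefix order and for the suffix order. For a
complete suffix code `X`, neutrality passes from the letters to `X`: `m_{X,Y} = m_{A,Y}` as long
as `m_{A,Y}` vanishes on the nonempty words of `S`. Applied with `Y = A`, then mirrored, then with
`Y = X`, this gives `m_{X,X} = m_S`, hence `m_{f⁻¹(S)}(u) = m_S(f u)`.
-/

namespace Paper

open List Set

variable {A : Type*}

theorem Factorial.preimage_reverse_s13 {S : Set (List A)} (h : Factorial S) :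
    Factorial (reverse ⁻¹' S) :=
  fun _ _ huv hv => h _ _ (reverse_infix.mpr huv) hv

theorem Factorial.preimage_of_append {B : Type*} {S : Set (List A)} (h : Factorial S)
    {f : List B → List A} (hf : ∀ u v, f (u ++ v) = f u ++ f v) : Factorial (f ⁻¹' S) :=
  fun _ _ ⟨s, t, hst⟩ hv => h _ _ ⟨f s, f t, by rw [← hf, ← hf, hst]⟩ hv

theorem Recurrent.preimage_reverse_s13 {S : Set (List A)} (h : Recurrent S) :
    Recurrent (reverse ⁻¹' S) := by
  obtain ⟨hne, hfac, hrec⟩ := h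
  refine ⟨fun hS => hne ?_, hfac.preimage_reverse_s13, fun u hu w hw => ?_⟩
  · rw [← image_preimage_eq S reverse_surjective, hS, image_singleton, reverse_nil]
  · obtain ⟨v, hv⟩ := hrec w.reverse hw u.reverse hu
    exact ⟨v.reverse, by simpa using hv⟩

theorem PrefixCode.preimage_reverse_s13 {X : Set (List A)} (h : PrefixCode X) :
    SuffixCode (reverse ⁻¹' X) :=
  ⟨h.1, fun _ hu _ hv huv => reverse_injective (h.2 _ hu _ hv (reverse_prefix.mpr huv))⟩

theorem SuffixCode.preimage_reverse_s13 {X : Set (List A)} (h : SuffixCode X) :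
    PrefixCode (reverse ⁻¹' X) :=
  ⟨h.1, fun _ hu _ hv huv => reverse_injective (h.2 _ hu _ hv (reverse_suffix.mpr huv))⟩

def PrefixComparable (X : Set (List A)) (w : List A) : Prop :=
  ∃ x ∈ X, x <+: w ∨ w <+: x

def SuffixComparable (X : Set (List A)) (w : List A) : Prop :=
  ∃ x ∈ X, x <:+ w ∨ w <:+ x

theorem prefixComparable_preimage_reverse {X : Set (List A)} {w : List A} :
    PrefixComparable (reverse ⁻¹' X) w ↔ SuffixComparable X w.reverse := by
  constructor
  · rintro ⟨x, hx, h⟩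
    exact ⟨x.reverse, hx, by rwa [reverse_suffix, reverse_suffix]⟩
  · rintro ⟨x, hx, h⟩
    refine ⟨x.reverse, by simpa using hx, ?_⟩
    rwa [← reverse_suffix, ← reverse_suffix, reverse_reverse]

theorem suffixComparable_preimage_reverse {X : Set (List A)} {w : List A} :
    SuffixComparable (reverse ⁻¹' X) w ↔ PrefixComparable X w.reverse := by
  constructor
  · rintro ⟨x, hx, h⟩
    exact ⟨x.reverse, hx, by rwa [reverse_prefix, reverse_prefix]⟩
  · rintro ⟨x, hx, h⟩
    refine ⟨x.reverse, by simpa using hx, ?_⟩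
    rwa [← reverse_prefix, ← reverse_prefix, reverse_reverse]

theorem PrefixComparable.of_prefix {X : Set (List A)} {w z : List A} (h : PrefixComparable X z)
    (hwz : w <+: z) : PrefixComparable X w := by
  obtain ⟨x, hx, hxz | hzx⟩ := h
  · exact ⟨x, hx, prefix_or_prefix_of_prefix hxz hwz⟩
  · exact ⟨x, hx, .inr (hwz.trans hzx)⟩

theorem SuffixComparable.of_suffix {X : Set (List A)} {w z : List A} (h : SuffixComparable X z)
    (hwz : w <:+ z) : SuffixComparable X w := by
  obtain ⟨x, hx, hxz | hzx⟩ := h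
  · exact ⟨x, hx, suffix_or_suffix_of_suffix hxz hwz⟩
  · exact ⟨x, hx, .inr (hwz.trans hzx)⟩

theorem PrefixCode.insert {X : Set (List A)} {z : List A} (hX : PrefixCode X) (hz : z ≠ [])
    (hzX : ¬ PrefixComparable X z) : PrefixCode (insert z X) := by
  refine ⟨by simp [hz.symm, hX.1], ?_⟩
  rintro u (rfl | hu) v (rfl | hv) huv
  exacts [rfl, (hzX ⟨v, hv, .inr huv⟩).elim, (hzX ⟨u, hu, .inl huv⟩).elim, hX.2 u hu v hv huv]

theorem SuffixCode.insert {X : Set (List A)} {z : List A} (hX : SuffixCode X) (hz : z ≠ [])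
    (hzX : ¬ SuffixComparable X z) : SuffixCode (insert z X) := by
  refine ⟨by simp [hz.symm, hX.1], ?_⟩
  rintro u (rfl | hu) v (rfl | hv) huv
  exacts [rfl, (hzX ⟨v, hv, .inr huv⟩).elim, (hzX ⟨u, hu, .inl huv⟩).elim, hX.2 u hu v hv huv]

/-- If `w` and `t` were incomparable with `X`, a word `w v t ∈ S` could be added to `X`. -/
theorem MaxBifixCode.prefixComparable_or_suffixComparable {S X : Set (List A)}
    (hX : MaxBifixCode S X) (hS : Recurrent S) {w t : List A} (hw : w ∈ S) (hw0 : w ≠ [])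
    (ht : t ∈ S) : PrefixComparable X w ∨ SuffixComparable X t := by
  by_contra! ⟨hwX, htX⟩
  obtain ⟨v, hv⟩ := hS.2.2 w hw t ht
  have hpre : ¬ PrefixComparable X (w ++ v ++ t) :=
    fun h => hwX (h.of_prefix (by simp [append_assoc]))
  have hsuf : ¬ SuffixComparable X (w ++ v ++ t) := fun h => htX (h.of_suffix (suffix_append _ _))
  have hz : w ++ v ++ t ≠ [] := by simp [hw0]
  have hXz : X = insert (w ++ v ++ t) X := hX.2.2 _
    ⟨hX.2.1.1.insert hz hpre, hX.2.1.2.insert hz hsuf⟩ (insert_subset hv hX.1) (subset_insert _ _)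
  exact hpre ⟨_, hXz ▸ mem_insert _ X, .inl (prefix_refl _)⟩

theorem InStar.append {X : Set (List A)} {m₁ m₂ : List A} (h₁ : InStar X m₁) (h₂ : InStar X m₂) :
    InStar X (m₁ ++ m₂) := by
  obtain ⟨l₁, hl₁, rfl⟩ := h₁
  obtain ⟨l₂, hl₂, rfl⟩ := h₂
  exact ⟨l₁ ++ l₂, fun u hu => (mem_append.mp hu).elim (hl₁ u) (hl₂ u), flatten_append⟩

theorem exists_eq_append_inStar {X : Set (List A)} (hX : [] ∉ X) (c : List A) :
    ∃ q m, q ++ m = c ∧ InStar X m ∧ ∀ x ∈ X, ¬ x <:+ q := by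
  induction h : c.length using Nat.strong_induction_on generalizing c with
  | _ n ih =>
  by_cases hc : ∃ x ∈ X, x <:+ c
  · obtain ⟨x, hx, c', rfl⟩ := hc
    have hx0 : 0 < x.length := length_pos_iff.mpr fun h0 => hX (h0 ▸ hx)
    obtain ⟨q, m, rfl, hm, hq⟩ := ih c'.length (by simp [← h]; omega) c' rfl
    exact ⟨q, m ++ x, by simp, hm.append ⟨[x], by simpa using hx, by simp⟩, hq⟩
  · push Not at hc
    exact ⟨c, [], append_nil c, ⟨[], by simp, rfl⟩, hc⟩

theorem PrefixCode.eq_of_append_eq {X : Set (List A)} (hX : PrefixCode X) {m₁ m₂ p₁ p₂ : List A}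
    (h₁ : InStar X m₁) (h₂ : InStar X m₂) (hp₁ : ∀ x ∈ X, ¬ x <+: p₁)
    (hp₂ : ∀ x ∈ X, ¬ x <+: p₂) (h : m₁ ++ p₁ = m₂ ++ p₂) : p₁ = p₂ := by
  obtain ⟨l₁, hl₁, rfl⟩ := h₁
  obtain ⟨l₂, hl₂, rfl⟩ := h₂
  induction l₁ generalizing l₂ with
  | nil =>
    cases l₂ with
    | nil => simpa using h
    | cons y l₂ => exact (hp₁ y (hl₂ y mem_cons_self) ⟨_, by simpa using h.symm⟩).elim
  | cons x l₁ ih =>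
    cases l₂ with
    | nil => exact (hp₂ x (hl₁ x mem_cons_self) ⟨_, by simpa using h⟩).elim
    | cons y l₂ =>
      simp only [flatten_cons, append_assoc] at h
      have hx := hl₁ x mem_cons_self
      have hy := hl₂ y mem_cons_self
      obtain rfl : x = y := by
        rcases prefix_or_prefix_of_prefix (prefix_append x _) (h ▸ prefix_append y _) with h' | h'
        exacts [hX.2 _ hx _ hy h', (hX.2 _ hy _ hx h').symm]
      exact ih (fun u hu => hl₁ u (mem_cons_of_mem _ hu)) l₂
        (fun u hu => hl₂ u (mem_cons_of_mem _ hu)) (by simpa [append_assoc] using h)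

theorem finite_setOf_isPrefix (z : List A) : {q | q <+: z}.Finite :=
  z.inits.finite_toSet.subset fun q hq => (mem_inits q z).mpr hq

theorem finite_setOf_isSuffix (z : List A) : {p | p <:+ z}.Finite :=
  z.tails.finite_toSet.subset fun p hp => (mem_tails p z).mpr hp

/-- Sending a suffix `p` of `z = c p` to the `q` of a parse `c = q m`, `m ∈ X*`, is injective. -/
theorem PrefixCode.ncard_suffixes_le {X : Set (List A)} (hX : PrefixCode X) (z : List A) :
    {p | p <:+ z ∧ ∀ x ∈ X, ¬ x <+: p}.ncard ≤ {q | q <+: z ∧ ∀ x ∈ X, ¬ x <:+ q}.ncard := by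
  choose ψ m hψ using exists_eq_append_inStar hX.1
  have hsplit : ∀ {p}, p <:+ z → z.take (z.length - p.length) ++ p = z := fun {p} hp => by
    conv_rhs => rw [← take_append_drop (z.length - p.length) z, ← suffix_iff_eq_drop.mp hp]
  refine ncard_le_ncard_of_injOn (fun p => ψ (z.take (z.length - p.length))) ?_ ?_
    ((finite_setOf_isPrefix z).subset fun q hq => hq.1)
  · intro p _
    exact ⟨((hψ _).1 ▸ prefix_append _ _).trans (take_prefix _ z), (hψ _).2.2⟩
  · intro p₁ hp₁ p₂ hp₂ heq
    have e₁ := hsplit hp₁.1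
    have e₂ := hsplit hp₂.1
    rw [← (hψ (z.take _)).1, append_assoc] at e₁ e₂
    simp only at heq
    rw [heq] at e₁
    exact hX.eq_of_append_eq (hψ _).2.1 (hψ _).2.1 hp₁.2 hp₂.2
      (append_cancel_left (e₁.trans e₂.symm))

theorem Recurrent.exists_le_ncard_suffixes {S : Set (List A)} (hS : Recurrent S) {w : List A}
    (hw : w ∈ S) (hw0 : w ≠ []) (k : ℕ) : ∃ z ∈ S, k ≤ {p | p <:+ z ∧ w <+: p}.ncard := by
  induction k with
  | zero => exact ⟨w, hw, Nat.zero_le _⟩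
  | succ k ih =>
    obtain ⟨z, hz, hk⟩ := ih
    obtain ⟨v, hv⟩ := hS.2.2 z hz w hw
    refine ⟨z ++ v ++ w, hv, ?_⟩
    set T := {p | p <:+ z ∧ w <+: p}
    have hw_notMem : w ∉ (· ++ (v ++ w)) '' T := by
      rintro ⟨p, ⟨-, hwp⟩, he⟩
      have := congrArg length he
      simp only [length_append] at this
      have := hwp.length_le
      have := length_pos_iff.mpr hw0
      omega
    have hsub : insert w ((· ++ (v ++ w)) '' T) ⊆ {p | p <:+ z ++ v ++ w ∧ w <+: p} := by
      rintro p (rfl | ⟨p, ⟨⟨t, rfl⟩, hwp⟩, rfl⟩)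
      · exact ⟨suffix_append _ _, prefix_refl _⟩
      · exact ⟨⟨t, by simp⟩, hwp.trans (prefix_append _ _)⟩
    calc k + 1 ≤ T.ncard + 1 := by omega
      _ = (insert w ((· ++ (v ++ w)) '' T)).ncard := by
        rw [ncard_insert_of_notMem hw_notMem
          (((finite_setOf_isSuffix z).subset fun p hp => hp.1).image _),
          ncard_image_of_injective _ (append_left_injective _)]
      _ ≤ _ := ncard_le_ncard hsub ((finite_setOf_isSuffix _).subset fun p hp => hp.1)

theorem ncard_le_of_forall_isPrefix {z : List A} {Q : Set (List A)} {M : ℕ}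
    (hQ : ∀ q ∈ Q, q <+: z ∧ q.length ≤ M) : Q.ncard ≤ M + 1 := by
  have hinj : InjOn length Q := fun q₁ h₁ q₂ h₂ hl =>
    (prefix_or_prefix_of_prefix (hQ q₁ h₁).1 (hQ q₂ h₂).1).elim (·.eq_of_length hl)
      fun h => (h.eq_of_length hl.symm).symm
  simpa using ncard_le_ncard_of_injOn length (fun q hq => mem_Iic.mpr (hQ q hq).2) hinj

/-- In a long word of `S` with more than `max |x|` suffixes starting with `w`, these suffixes
have no prefix in `X`, while the prefixes without suffix in `X` are short; this contradicts
`PrefixCode.ncard_suffixes_le`. -/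
theorem prefixComparable_of_suffixComparable {S X : Set (List A)} (hS : Recurrent S)
    (hXfin : X.Finite) (hX : PrefixCode X) (hsuf : ∀ t ∈ S, t ≠ [] → SuffixComparable X t)
    {w : List A} (hw : w ∈ S) (hw0 : w ≠ []) : PrefixComparable X w := by
  by_contra hwX
  obtain ⟨M, hM⟩ := (hXfin.image length).bddAbove
  obtain ⟨z, hz, hk⟩ := hS.exists_le_ncard_suffixes hw hw0 (M + 2)
  have hP : M + 2 ≤ {p | p <:+ z ∧ ∀ x ∈ X, ¬ x <+: p}.ncard :=
    hk.trans <| ncard_le_ncard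
      (fun p ⟨hpz, hwp⟩ => ⟨hpz, fun x hx hxp => hwX ⟨x, hx, prefix_or_prefix_of_prefix hxp hwp⟩⟩)
      ((finite_setOf_isSuffix z).subset fun p hp => hp.1)
  have hQ : {q | q <+: z ∧ ∀ x ∈ X, ¬ x <:+ q}.ncard ≤ M + 1 := by
    refine ncard_le_of_forall_isPrefix fun q ⟨hqz, hq⟩ => ⟨hqz, ?_⟩
    by_contra! hlong
    obtain ⟨x, hx, hxq | hqx⟩ :=
      hsuf q (hS.2.1 _ _ hqz.isInfix hz) (ne_nil_of_length_pos (by omega))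
    · exact hq x hx hxq
    · exact absurd (hqx.length_le.trans (hM (mem_image_of_mem _ hx))) (by omega)
  have := hX.ncard_suffixes_le z
  omega

theorem suffixComparable_of_prefixComparable {S X : Set (List A)} (hS : Recurrent S)
    (hXfin : X.Finite) (hX : SuffixCode X) (hpre : ∀ t ∈ S, t ≠ [] → PrefixComparable X t)
    {w : List A} (hw : w ∈ S) (hw0 : w ≠ []) : SuffixComparable X w := by
  have := prefixComparable_of_suffixComparable hS.preimage_reverse_s13
    (hXfin.preimage reverse_injective.injOn) hX.preimage_reverse_s13
    (fun t ht ht0 => suffixComparable_preimage_reverse.mpr (hpre _ ht (by simpa using ht0)))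
    (w := w.reverse) (by simpa using hw) (by simpa using hw0)
  simpa using prefixComparable_preimage_reverse.mp this

/-- For factorial `S` these are the `S`-maximal suffix codes. -/
structure CompleteSuffixCode (S X : Set (List A)) : Prop where
  subset : X ⊆ S
  suffixCode : SuffixCode X
  comparable : ∀ w ∈ S, w ≠ [] → SuffixComparable X w

structure CompletePrefixCode (S X : Set (List A)) : Prop where
  subset : X ⊆ S
  prefixCode : PrefixCode X
  comparable : ∀ w ∈ S, w ≠ [] → PrefixComparable X w

theorem CompletePrefixCode.preimage_reverse_s13 {S Y : Set (List A)} (h : CompletePrefixCode S Y) :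
    CompleteSuffixCode (reverse ⁻¹' S) (reverse ⁻¹' Y) where
  subset _ hy := h.subset hy
  suffixCode := h.prefixCode.preimage_reverse_s13
  comparable w hw hw0 := suffixComparable_preimage_reverse.mpr <|
    h.comparable _ hw (by simpa using hw0)

theorem MaxBifixCode.completePrefixCode_and_completeSuffixCode {S X : Set (List A)}
    (hX : MaxBifixCode S X) (hS : Recurrent S) (hXfin : X.Finite) :
    CompletePrefixCode S X ∧ CompleteSuffixCode S X := by
  have hcases : (∀ w ∈ S, w ≠ [] → PrefixComparable X w) ∨
      ∀ t ∈ S, t ≠ [] → SuffixComparable X t := by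
    by_contra! ⟨⟨w, hw, hw0, hwX⟩, ⟨t, ht, -, htX⟩⟩
    exact (hX.prefixComparable_or_suffixComparable hS hw hw0 ht).elim hwX htX
  have hpre : ∀ w ∈ S, w ≠ [] → PrefixComparable X w :=
    hcases.elim id fun hsuf _ => prefixComparable_of_suffixComparable hS hXfin hX.2.1.1 hsuf
  exact ⟨⟨hX.1, hX.2.1.1, hpre⟩,
    ⟨hX.1, hX.2.1.2, fun _ => suffixComparable_of_prefixComparable hS hXfin hX.2.1.2 hpre⟩⟩

def codeExtL (S X : Set (List A)) (w : List A) : Set (List A) := {x ∈ X | x ++ w ∈ S}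

def codeExtR (S Y : Set (List A)) (w : List A) : Set (List A) := {y ∈ Y | w ++ y ∈ S}

def codeExtE (S X Y : Set (List A)) (w : List A) : Set (List A × List A) :=
  {p ∈ X ×ˢ Y | p.1 ++ w ++ p.2 ∈ S}

noncomputable def rhoCode (S X Y : Set (List A)) (w : List A) : ℤ :=
  ((codeExtE S X Y w).ncard : ℤ) - (codeExtL S X w).ncard

noncomputable def mCode (S X Y : Set (List A)) (w : List A) : ℤ :=
  rhoCode S X Y w - (codeExtR S Y w).ncard + 1

def letters : Set (List A) := range fun a => [a]

theorem mS_preimage {B : Type*} (S : Set (List A)) {X : Set (List A)} {f : List B → List A}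
    (hf : ∀ u v, f (u ++ v) = f u ++ f v) (hbij : BijOn (fun b => f [b]) univ X) (u : List B) :
    mS (f ⁻¹' S) u = mCode S X X (f u) := by
  set g : B → List A := fun b => f [b]
  have hg : Function.Injective g := injOn_univ.mp hbij.injOn
  have hcons : ∀ b u, f (b :: u) = g b ++ f u := fun b u => hf [b] u
  have hsandwich : ∀ b c, f (b :: (u ++ [c])) = g b ++ f u ++ g c := fun b c => by
    rw [hcons, hf, append_assoc]
  have hL : g '' extL (f ⁻¹' S) u = codeExtL S X (f u) := by
    ext x
    constructor
    · rintro ⟨b, hb, rfl⟩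
      exact ⟨hbij.mapsTo trivial, by simpa [extL, hcons] using hb⟩
    · rintro ⟨hx, hxu⟩
      obtain ⟨b, -, rfl⟩ := hbij.surjOn hx
      exact ⟨b, by simpa [extL, hcons] using hxu, rfl⟩
  have hR : g '' extR (f ⁻¹' S) u = codeExtR S X (f u) := by
    ext y
    constructor
    · rintro ⟨b, hb, rfl⟩
      exact ⟨hbij.mapsTo trivial, by simpa [extR, hf] using hb⟩
    · rintro ⟨hy, hyu⟩
      obtain ⟨b, -, rfl⟩ := hbij.surjOn hy
      exact ⟨b, by simpa [extR, hf] using hyu, rfl⟩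
  have hE : Prod.map g g '' extE (f ⁻¹' S) u = codeExtE S X X (f u) := by
    ext ⟨x, y⟩
    constructor
    · rintro ⟨⟨b, c⟩, hbc, he⟩
      obtain ⟨rfl, rfl⟩ := Prod.ext_iff.mp he
      exact ⟨⟨hbij.mapsTo trivial, hbij.mapsTo trivial⟩, by
        simpa only [extE, mem_ofPred_eq, mem_preimage, hsandwich, Prod.map_fst, Prod.map_snd]
          using hbc⟩
    · rintro ⟨⟨hx, hy⟩, hxy⟩
      obtain ⟨b, -, rfl⟩ := hbij.surjOn hx
      obtain ⟨c, -, rfl⟩ := hbij.surjOn hy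
      exact ⟨(b, c), by simpa only [extE, mem_ofPred_eq, mem_preimage, hsandwich] using hxy, rfl⟩
  rw [mS, mCode, rhoCode, ← hL, ← hR, ← hE, ncard_image_of_injective _ hg,
    ncard_image_of_injective _ hg, ncard_image_of_injective _ (hg.prodMap hg)]

theorem mS_eq_mCode_letters (S : Set (List A)) (w : List A) :
    mS S w = mCode S letters letters w :=
  mS_preimage S (f := id) (fun _ _ => rfl)
    ⟨fun a _ => mem_range_self a, List.singleton_injective.injOn,
      fun _ ⟨a, ha⟩ => ⟨a, trivial, ha⟩⟩ w

theorem preimage_reverse_letters : reverse ⁻¹' (letters : Set (List A)) = letters := by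
  ext l
  simp only [letters, mem_preimage, Set.mem_range]
  constructor <;> rintro ⟨a, h⟩ <;> refine ⟨a, ?_⟩
  · rw [← reverse_reverse l, ← h, reverse_singleton]
  · rw [← h, reverse_singleton]

theorem ncard_preimage_reverse (T : Set (List A)) : (reverse ⁻¹' T).ncard = T.ncard :=
  ncard_preimage_of_injective_subset_range reverse_injective (by simp [reverse_surjective.range_eq])

theorem mCode_preimage_reverse (S X Y : Set (List A)) (w : List A) :
    mCode (reverse ⁻¹' S) (reverse ⁻¹' Y) (reverse ⁻¹' X) w.reverse = mCode S X Y w := by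
  have hL : codeExtL (reverse ⁻¹' S) (reverse ⁻¹' Y) w.reverse = reverse ⁻¹' codeExtR S Y w := by
    ext y; simp [codeExtL, codeExtR]
  have hR : codeExtR (reverse ⁻¹' S) (reverse ⁻¹' X) w.reverse = reverse ⁻¹' codeExtL S X w := by
    ext x; simp [codeExtL, codeExtR]
  have hE : codeExtE (reverse ⁻¹' S) (reverse ⁻¹' Y) (reverse ⁻¹' X) w.reverse =
      (fun p => (p.2.reverse, p.1.reverse)) ⁻¹' codeExtE S X Y w := by
    ext p; simp [codeExtE, and_comm, append_assoc]
  have hswap : Function.Bijective fun p : List A × List A => (p.2.reverse, p.1.reverse) :=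
    Function.bijective_iff_has_inverse.mpr
      ⟨fun p => (p.2.reverse, p.1.reverse), fun _ => by simp, fun _ => by simp⟩
  rw [mCode, mCode, rhoCode, rhoCode, hL, hR, hE, ncard_preimage_reverse, ncard_preimage_reverse,
    ncard_preimage_of_injective_subset_range hswap.1 (by simp [hswap.2.range_eq])]
  ring

theorem mS_preimage_reverse (S : Set (List A)) (w : List A) :
    mS (reverse ⁻¹' S) w.reverse = mS S w := by
  simpa only [mS_eq_mCode_letters, preimage_reverse_letters] using
    mCode_preimage_reverse S letters letters w

theorem Neutral.preimage_reverse_s13 {S : Set (List A)} (hN : Neutral S) :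
    Neutral (reverse ⁻¹' S) := by
  refine ⟨hN.1.preimage_reverse_s13, fun u hu hu0 => ?_⟩
  rw [← reverse_reverse u, mS_preimage_reverse]
  exact hN.2 _ hu (by simpa using hu0)

section rhoCode

variable {S X Y : Set (List A)} {w : List A}

theorem codeExtL_subset : codeExtL S X w ⊆ X := sep_subset _ _

theorem codeExtE_subset : codeExtE S X Y w ⊆ X ×ˢ Y := sep_subset _ _

theorem rhoCode_union {X₁ X₂ : Set (List A)} (hdisj : Disjoint X₁ X₂) (h₁ : X₁.Finite)
    (h₂ : X₂.Finite) (hY : Y.Finite) :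
    rhoCode S (X₁ ∪ X₂) Y w = rhoCode S X₁ Y w + rhoCode S X₂ Y w := by
  have hL : codeExtL S (X₁ ∪ X₂) w = codeExtL S X₁ w ∪ codeExtL S X₂ w := sep_union
  have hE : codeExtE S (X₁ ∪ X₂) Y w = codeExtE S X₁ Y w ∪ codeExtE S X₂ Y w := by
    rw [codeExtE, union_prod]; exact sep_union
  rw [rhoCode, rhoCode, rhoCode, hL, hE,
    ncard_union_eq (hdisj.mono codeExtL_subset codeExtL_subset) (h₁.subset codeExtL_subset)
      (h₂.subset codeExtL_subset),
    ncard_union_eq ((disjoint_prod.mpr (.inl hdisj)).mono codeExtE_subset codeExtE_subset)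
      ((h₁.prod hY).subset codeExtE_subset) ((h₂.prod hY).subset codeExtE_subset)]
  push_cast
  ring

theorem rhoCode_image_append (v : List A) :
    rhoCode S ((· ++ v) '' X) Y w = rhoCode S X Y (v ++ w) := by
  have hL : codeExtL S ((· ++ v) '' X) w = (· ++ v) '' codeExtL S X (v ++ w) := by
    ext x
    constructor
    · rintro ⟨⟨x, hx, rfl⟩, hxw⟩
      exact ⟨x, ⟨hx, by simpa using hxw⟩, rfl⟩
    · rintro ⟨x, ⟨hx, hxw⟩, rfl⟩
      exact ⟨mem_image_of_mem _ hx, by simpa using hxw⟩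
  have hE : codeExtE S ((· ++ v) '' X) Y w =
      Prod.map (· ++ v) id '' codeExtE S X Y (v ++ w) := by
    ext ⟨x, y⟩
    constructor
    · rintro ⟨⟨⟨x, hx, rfl⟩, hy⟩, hxy⟩
      exact ⟨(x, y), ⟨⟨hx, hy⟩, by simpa using hxy⟩, rfl⟩
    · rintro ⟨⟨x, y⟩, ⟨⟨hx, hy⟩, hxy⟩, he⟩
      obtain ⟨rfl, rfl⟩ := Prod.ext_iff.mp he
      exact ⟨⟨mem_image_of_mem _ hx, hy⟩, by simpa using hxy⟩
  rw [rhoCode, rhoCode, hL, hE, ncard_image_of_injective _ (append_left_injective v),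
    ncard_image_of_injective _ ((append_left_injective v).prodMap Function.injective_id)]

theorem rhoCode_inter_self (hFac : Factorial S) : rhoCode S (X ∩ S) Y w = rhoCode S X Y w := by
  have hL : codeExtL S (X ∩ S) w = codeExtL S X w := by
    ext x
    exact ⟨fun h => ⟨h.1.1, h.2⟩, fun h => ⟨⟨h.1, hFac _ _ (prefix_append _ _).isInfix h.2⟩, h.2⟩⟩
  have hE : codeExtE S (X ∩ S) Y w = codeExtE S X Y w := by
    ext p
    refine ⟨fun h => ⟨⟨h.1.1.1, h.1.2⟩, h.2⟩, fun h => ⟨⟨⟨h.1.1, ?_⟩, h.1.2⟩, h.2⟩⟩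
    exact hFac _ _ ((prefix_append _ _).trans (prefix_append _ _)).isInfix h.2
  rw [rhoCode, rhoCode, hL, hE]

theorem mCode_of_not_mem (hFac : Factorial S) (hw : w ∉ S) : mCode S X Y w = 1 := by
  have hL : codeExtL S X w = ∅ :=
    eq_empty_of_forall_notMem fun x hx => hw (hFac _ _ (suffix_append _ _).isInfix hx.2)
  have hR : codeExtR S Y w = ∅ :=
    eq_empty_of_forall_notMem fun y hy => hw (hFac _ _ (prefix_append _ _).isInfix hy.2)
  have hE : codeExtE S X Y w = ∅ :=
    eq_empty_of_forall_notMem fun p hp => hw (hFac _ _ ⟨p.1, p.2, rfl⟩ hp.2)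
  simp [mCode, rhoCode, hL, hR, hE]

def leftExtensions (S : Set (List A)) (v : List A) : Set (List A) := {u ∈ S | ∃ b, u = b :: v}

theorem rhoCode_leftExtensions (hFac : Factorial S) (v : List A) :
    rhoCode S (leftExtensions S v) Y w = rhoCode S letters Y (v ++ w) := by
  have h : leftExtensions S v = (· ++ v) '' letters ∩ S := by
    ext u
    constructor
    · rintro ⟨hu, b, rfl⟩
      exact ⟨⟨[b], mem_range_self b, rfl⟩, hu⟩
    · rintro ⟨⟨_, ⟨b, rfl⟩, rfl⟩, hu⟩
      exact ⟨hu, b, rfl⟩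
  rw [h, rhoCode_inter_self hFac, rhoCode_image_append]

/-- This is `m_{A,Y}(v w) = 0` rearranged; when `v w ∉ S` both sides vanish. -/
theorem rhoCode_singleton (hFac : Factorial S) (hY : ∀ u ∈ S, u ≠ [] → mCode S letters Y u = 0)
    {v : List A} (hv : v ≠ []) : rhoCode S {v} Y w = rhoCode S letters Y (v ++ w) := by
  have hE : codeExtE S {v} Y w = (v, ·) '' codeExtR S Y (v ++ w) := by
    ext ⟨x, y⟩
    constructor
    · rintro ⟨⟨rfl, hy⟩, hxy⟩
      exact ⟨y, ⟨hy, by simpa using hxy⟩, rfl⟩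
    · rintro ⟨y, ⟨hy, hxy⟩, he⟩
      obtain ⟨rfl, rfl⟩ := Prod.ext_iff.mp he
      exact ⟨⟨rfl, hy⟩, by simpa using hxy⟩
  by_cases hvw : v ++ w ∈ S
  · have hL : codeExtL S {v} w = {v} := ext fun x => ⟨fun h => h.1, fun h => ⟨h, h ▸ hvw⟩⟩
    have := hY _ hvw (by simp [hv])
    rw [mCode] at this
    rw [rhoCode, hE, hL, ncard_image_of_injective _ (Prod.mk_right_injective v), ncard_singleton]
    push_cast
    linarith
  · have hL : codeExtL S {v} w = ∅ := eq_empty_of_forall_notMem fun x h => hvw (h.1 ▸ h.2)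
    have := mCode_of_not_mem (X := letters) (Y := Y) hFac hvw
    rw [mCode] at this
    rw [rhoCode, hE, hL, ncard_image_of_injective _ (Prod.mk_right_injective v), ncard_empty]
    push_cast
    linarith

end rhoCode

theorem eq_or_exists_cons_isSuffix {v u : List A} (h : v <:+ u) :
    v = u ∨ ∃ b, b :: v <:+ u := by
  obtain ⟨t, rfl⟩ := h
  rcases t.eq_nil_or_concat with rfl | ⟨t, b, rfl⟩
  · exact .inl rfl
  · exact .inr ⟨b, t, by simp⟩

theorem SuffixCode.notMem_of_cons_mem {X : Set (List A)} (hX : SuffixCode X) {a : A}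
    {v : List A} (hv : a :: v ∈ X) : v ∉ X :=
  fun h => cons_ne_self a v (hX.2 _ h _ hv (suffix_cons a v)).symm

namespace CompleteSuffixCode

variable {S X : Set (List A)} {a : A} {v : List A}

theorem eq_letters_inter (hX : CompleteSuffixCode S X) (hshort : ∀ x ∈ X, x.length ≤ 1) :
    X = letters ∩ S := by
  have hlen : ∀ x ∈ X, x.length = 1 := fun x hx =>
    le_antisymm (hshort x hx) (length_pos_iff.mpr fun h => hX.suffixCode.1 (h ▸ hx))
  ext x
  constructor
  · intro hx
    obtain ⟨a, rfl⟩ := length_eq_one_iff.mp (hlen x hx)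
    exact ⟨mem_range_self a, hX.subset hx⟩
  · rintro ⟨⟨a, rfl⟩, ha⟩
    obtain ⟨y, hy, hya | hay⟩ := hX.comparable _ ha (cons_ne_nil a [])
    · rwa [← hya.eq_of_length (hlen y hy)]
    · rwa [hay.eq_of_length (hlen y hy).symm]

theorem leftExtensions_subset (hX : CompleteSuffixCode S X) (hv : a :: v ∈ X)
    (hmax : ∀ y ∈ X, y.length ≤ (a :: v).length) : leftExtensions S v ⊆ X := by
  rintro _ ⟨hbv, b, rfl⟩
  obtain ⟨y, hy, hyb | hby⟩ := hX.comparable _ hbv (cons_ne_nil b v)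
  · rcases suffix_cons_iff.mp hyb with rfl | hyv
    · exact hy
    · have := hX.suffixCode.2 _ hy _ hv (hyv.trans (suffix_cons a v))
      subst this
      simpa using hyv.length_le
  · rwa [hby.eq_of_length (le_antisymm hby.length_le (by simpa using hmax y hy))]

theorem shorten (hFac : Factorial S) (hX : CompleteSuffixCode S X) (hv : a :: v ∈ X)
    (hmax : ∀ y ∈ X, y.length ≤ (a :: v).length) (hv0 : v ≠ []) :
    CompleteSuffixCode S (insert v (X \ leftExtensions S v)) := by
  have hZX := hX.leftExtensions_subset hv hmax
  have hcode := hX.suffixCode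
  refine ⟨insert_subset (hFac _ _ (suffix_cons a v).isInfix (hX.subset hv))
    (sdiff_subset.trans hX.subset), ⟨by simp [hv0.symm, hcode.1], ?_⟩, fun w hw hw0 => ?_⟩
  · rintro x (hxv | ⟨hx, -⟩) y (hyv | ⟨hy, hyZ⟩) hxy
    · exact hxv.trans hyv.symm
    · rw [hxv] at hxy ⊢
      rcases eq_or_exists_cons_isSuffix hxy with h | ⟨b, hb⟩
      · exact h
      · have hbZ : b :: v ∈ leftExtensions S v := ⟨hFac _ _ hb.isInfix (hX.subset hy), b, rfl⟩
        exact (hyZ (hcode.2 _ (hZX hbZ) _ hy hb ▸ hbZ)).elim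
    · rw [hyv] at hxy
      have := hcode.2 _ hx _ hv (hxy.trans (suffix_cons a v))
      subst this
      simpa using hxy.length_le
    · exact hcode.2 _ hx _ hy hxy
  · obtain ⟨y, hy, hyw⟩ := hX.comparable w hw hw0
    by_cases hyZ : y ∈ leftExtensions S v
    · obtain ⟨-, b, rfl⟩ := hyZ
      refine ⟨v, mem_insert v _, ?_⟩
      rcases hyw with hbw | hwb
      · exact .inl ((suffix_cons b v).trans hbw)
      · rcases suffix_cons_iff.mp hwb with rfl | hwv
        exacts [.inl (suffix_cons b v), .inr hwv]
    · exact ⟨y, mem_insert_of_mem v ⟨hy, hyZ⟩, hyw⟩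

end CompleteSuffixCode

theorem finsum_mem_insert_sdiff_lt {α : Type*} {f : α → ℕ} {X Z : Set α} (hX : X.Finite)
    {x x' : α} (hx : x ∈ X ∩ Z) (hx' : x' ∉ X) (hlt : f x' < f x) :
    ∑ᶠ y ∈ insert x' (X \ Z), f y < ∑ᶠ y ∈ X, f y := by
  have hXZ : ∑ᶠ y ∈ X ∩ Z, f y = f x + ∑ᶠ y ∈ (X ∩ Z) \ {x}, f y := by
    rw [← finsum_mem_insert (s := (X ∩ Z) \ {x}) f (fun h => h.2 rfl) (hX.inter_of_left Z).sdiff,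
      insert_sdiff_singleton, insert_eq_of_mem hx]
  rw [finsum_mem_insert f (fun h => hx' h.1) hX.sdiff, ← finsum_mem_inter_add_sdiff Z hX, hXZ]
  omega

/-- Induction on the total length of `X`: a longest word `a v` of `X` with `v ≠ []` is removed
with all its siblings `b v` and replaced by `v` (`CompleteSuffixCode.shorten`), which does not
change `rhoCode` by `rhoCode_leftExtensions` and `rhoCode_singleton`. -/
theorem rhoCode_eq_rhoCode_letters {S X Y : Set (List A)} (hFac : Factorial S) (hYfin : Y.Finite)
    (hY : ∀ u ∈ S, u ≠ [] → mCode S letters Y u = 0) (hX : CompleteSuffixCode S X)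
    (hXfin : X.Finite) (w : List A) : rhoCode S X Y w = rhoCode S letters Y w := by
  induction h : ∑ᶠ y ∈ X, y.length using Nat.strong_induction_on generalizing X with
  | _ n ih =>
  by_cases hshort : ∀ x ∈ X, x.length ≤ 1
  · rw [hX.eq_letters_inter hshort, rhoCode_inter_self hFac]
  push Not at hshort
  obtain ⟨x₀, hx₀, hx₀2⟩ := hshort
  obtain ⟨_ | ⟨a, v⟩, hv, hmax⟩ := exists_max_image X length hXfin ⟨x₀, hx₀⟩
  · simpa using (hmax x₀ hx₀).trans_lt' hx₀2
  have hv0 : v ≠ [] := ne_nil_of_length_pos (by simpa using (hmax x₀ hx₀).trans_lt' hx₀2)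
  set Z := leftExtensions S v
  have hZX : Z ⊆ X := hX.leftExtensions_subset hv hmax
  have hvZ : a :: v ∈ Z := ⟨hX.subset hv, a, rfl⟩
  have hZfin : Z.Finite := hXfin.subset hZX
  have hX' := hX.shorten hFac hv hmax hv0
  have hIH := ih _ (h ▸ finsum_mem_insert_sdiff_lt hXfin ⟨hv, hvZ⟩
    (hX.suffixCode.notMem_of_cons_mem hv) (by simp)) hX' (hXfin.sdiff.insert v) rfl
  rw [Set.insert_eq, union_comm, rhoCode_union (by simp [hX.suffixCode.notMem_of_cons_mem hv])
    hXfin.sdiff (finite_singleton v) hYfin, rhoCode_singleton hFac hY hv0] at hIH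
  rw [← sdiff_union_of_subset hZX, rhoCode_union disjoint_sdiff_left hXfin.sdiff hZfin hYfin,
    rhoCode_leftExtensions hFac, hIH]

theorem finite_letters [Finite A] : (letters : Set (List A)).Finite := finite_range _

theorem Neutral.mCode_letters_right [Finite A] {S X : Set (List A)} (hN : Neutral S)
    (hX : CompleteSuffixCode S X) (hXfin : X.Finite) (w : List A) :
    mCode S X letters w = mS S w := by
  have hY : ∀ u ∈ S, u ≠ [] → mCode S letters letters u = 0 := fun u hu hu0 => by
    rw [← mS_eq_mCode_letters]; exact hN.2 u hu hu0
  rw [mCode, rhoCode_eq_rhoCode_letters hN.1 finite_letters hY hX hXfin, ← mCode,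
    mS_eq_mCode_letters]

theorem Neutral.mCode_letters_left [Finite A] {S Y : Set (List A)} (hN : Neutral S)
    (hY : CompletePrefixCode S Y) (hYfin : Y.Finite) (w : List A) :
    mCode S letters Y w = mS S w := by
  rw [← mCode_preimage_reverse, preimage_reverse_letters,
    hN.preimage_reverse_s13.mCode_letters_right hY.preimage_reverse_s13
      (hYfin.preimage reverse_injective.injOn), mS_preimage_reverse]

theorem Neutral.mCode_eq_mS [Finite A] {S X Y : Set (List A)} (hN : Neutral S)
    (hX : CompleteSuffixCode S X) (hXfin : X.Finite) (hY : CompletePrefixCode S Y)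
    (hYfin : Y.Finite) (w : List A) : mCode S X Y w = mS S w := by
  have hYneu : ∀ u ∈ S, u ≠ [] → mCode S letters Y u = 0 := fun u hu hu0 => by
    rw [hN.mCode_letters_left hY hYfin]; exact hN.2 u hu hu0
  rw [mCode, rhoCode_eq_rhoCode_letters hN.1 hYfin hYneu hX hXfin, ← mCode,
    hN.mCode_letters_left hY hYfin]

end Paper

open Paper in
theorem maximal_bifix_decoding_neutral_general
    {A B : Type*} [Fintype A] (S X : Set (List A))
    (hS : Recurrent S) (hN : Neutral S)
    (hXfin : X.Finite) (hX : MaxBifixCode S X)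
    (f : List B → List A)
    (hf : ∀ u v : List B, f (u ++ v) = f u ++ f v)
    (hbij : Set.BijOn (fun b : B => f [b]) Set.univ X) :
    Neutral (f ⁻¹' S) ∧ chiS (f ⁻¹' S) = chiS S := by
  obtain ⟨hpre, hsuf⟩ := hX.completePrefixCode_and_completeSuffixCode hS hXfin
  have hm : ∀ u, mS (f ⁻¹' S) u = mS S (f u) := fun u => by
    rw [mS_preimage S hf hbij, hN.mCode_eq_mS hsuf hXfin hpre hXfin]
  have hne : ∀ u ≠ [], f u ≠ [] := by
    rintro (_ | ⟨b, u⟩) hu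
    · exact (hu rfl).elim
    · rw [show f (b :: u) = f [b] ++ f u from hf [b] u]
      exact List.append_ne_nil_of_left_ne_nil (fun h => hX.2.1.1.1 (h ▸ hbij.mapsTo trivial)) _
  have hnil : f [] = [] := by simpa using hf [] []
  refine ⟨⟨hN.1.preimage_of_append hf, fun u hu hu0 => ?_⟩, by rw [chiS, chiS, hm, hnil]⟩
  rw [hm]
  exact hN.2 _ hu (hne u hu0)

open Paper in
/-- Maximal bifix decoding of a recurrent neutral set: if `f : B* → A*` is a coding
morphism for a finite `S`-maximal bifix code `X` (a morphism mapping the letters of `B`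
bijectively onto `X`), then `U = f⁻¹(S)` is a neutral set with `χ(U) = χ(S)`. -/
theorem maximal_bifix_decoding_neutral
    {A B : Type*} [Fintype A] [Fintype B] (S X : Set (List A))
    (hS : Recurrent S) (hN : Neutral S)
    (hXfin : X.Finite) (hX : MaxBifixCode S X)
    (f : List B → List A)
    (hf : ∀ u v : List B, f (u ++ v) = f u ++ f v)
    (hbij : Set.BijOn (fun b : B => f [b]) Set.univ X) :
    Neutral (f ⁻¹' S) ∧ chiS (f ⁻¹' S) = chiS S :=
  maximal_bifix_decoding_neutral_general S X hS hN hXfin hX f hf hbij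
end
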